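/- arXiv:1905.01708 — 7 statements merged into one kernel-verified Lean document; each statement's English description precedes it below -/
import Mathlib

section
/- Let D > 0 and let x be a point of the Euclidean plane ℝ² with ‖x‖ < D. Let Z be a random point distributed according to the uniform probability measure on the closed disk of radius D centered at x. Then for every y with 0 ≤ y ≤ D − ‖x‖, the probability that ‖Z‖ ≤ y equals y²/D². -/
open MeasureTheory

/-- Lemma 1 (inner region): if `Z` is uniform on the closed disk of radius `D` centered at
`x` with `‖x‖ < D`, then for `0 ≤ y ≤ D - ‖x‖` the probability that `‖Z‖ ≤ y` is `y²/D²`. -/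
theorem uniform_disk_dist_cdf_inner (D : ℝ) (hD : 0 < D) (x : EuclideanSpace ℝ (Fin 2))
    (hx : ‖x‖ < D) (y : ℝ) (hy₀ : 0 ≤ y) (hy : y ≤ D - ‖x‖) :
    ((ENNReal.ofReal (Real.pi * D ^ 2))⁻¹ • volume.restrict (Metric.closedBall x D))
        {z : EuclideanSpace ℝ (Fin 2) | ‖z‖ ≤ y} = ENNReal.ofReal (y ^ 2 / D ^ 2) := by
  have hset : {z : EuclideanSpace ℝ (Fin 2) | ‖z‖ ≤ y} = Metric.closedBall 0 y := by
    ext z; simp [Metric.mem_closedBall, dist_zero_right]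
  have hsub : Metric.closedBall (0 : EuclideanSpace ℝ (Fin 2)) y ⊆ Metric.closedBall x D := by
    intro z hz
    rw [Metric.mem_closedBall] at hz ⊢
    have : dist z x ≤ dist z 0 + dist (0 : EuclideanSpace ℝ (Fin 2)) x := dist_triangle _ _ _
    have h0x : dist (0 : EuclideanSpace ℝ (Fin 2)) x = ‖x‖ := by
      simp [dist_eq_norm]
    linarith
  rw [Measure.smul_apply, hset, Measure.restrict_apply' measurableSet_closedBall,
    Set.inter_eq_self_of_subset_left hsub, EuclideanSpace.volume_closedBall]
  have hcard : Fintype.card (Fin 2) = 2 := by simp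
  rw [hcard]
  have hGamma : Real.Gamma ((2 : ℕ) / 2 + 1) = 1 := by
    norm_num [Real.Gamma_two]
  rw [hGamma]
  have hsq : Real.sqrt Real.pi ^ 2 = Real.pi := Real.sq_sqrt Real.pi_pos.le
  rw [hsq]
  have hπD : 0 < Real.pi * D ^ 2 := by positivity
  rw [smul_eq_mul, ← ENNReal.ofReal_inv_of_pos hπD, ← ENNReal.ofReal_pow hy₀,
    ← ENNReal.ofReal_mul (by positivity), ← ENNReal.ofReal_mul (by positivity)]
  congr 1
  field_simp
end

section
/- Let D > 0 and let x be a point of the Euclidean plane ℝ² with ‖x‖ > 0. Let Z be a random point distributed according to the uniform probability measure on the closed disk of radius D centered at x. Then for every y with |‖x‖ − D| ≤ y ≤ ‖x‖ + D, the probability that ‖Z‖ ≤ y equals B_{‖x‖}(y)/(πD²), where B_{‖x‖}(y) = D²·arccos((D² + ‖x‖² − y²)/(2‖x‖D)) + y²·arccos((y² + ‖x‖² − D²)/(2‖x‖y)) − (1/2)·√(((y + ‖x‖)² − D²)(D² − (y − ‖x‖)²)). -/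
open MeasureTheory Real Set

set_option maxHeartbeats 1000000

lemma sqrt_integral_key (r c : ℝ) (hr : 0 ≤ r) (h1 : -r ≤ c) (h2 : c ≤ r) :
    ∫ t in c..r, 2 * Real.sqrt (r ^ 2 - t ^ 2) =
      r ^ 2 * Real.arccos (c / r) - c * Real.sqrt (r ^ 2 - c ^ 2) := by
  rcases eq_or_lt_of_le hr with hr0 | hr0
  · have hc : c = 0 := le_antisymm (by simpa [← hr0] using h2) (by simpa [← hr0] using h1)
    simp [← hr0, hc]
  set F : ℝ → ℝ := fun t => t * Real.sqrt (r ^ 2 - t ^ 2) + r ^ 2 * Real.arcsin (t / r) with hF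
  have hcont : ContinuousOn F (Icc c r) := by
    apply Continuous.continuousOn
    exact (continuous_id.mul ((continuous_const.sub (continuous_pow 2)).sqrt)).add
      (continuous_const.mul (Real.continuous_arcsin.comp (continuous_id.div_const r)))
  have hderiv : ∀ t ∈ Ioo c r, HasDerivWithinAt F (2 * Real.sqrt (r ^ 2 - t ^ 2)) (Ioi t) t := by
    intro t ht
    have htr : -r < t := lt_of_le_of_lt h1 ht.1
    have htr2 : t < r := ht.2
    have hpos : 0 < r ^ 2 - t ^ 2 := by nlinarith
    have hS : 0 < Real.sqrt (r ^ 2 - t ^ 2) := Real.sqrt_pos.2 hpos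
    have hinner : HasDerivAt (fun u : ℝ => r ^ 2 - u ^ 2) (-(2 * t)) t := by
      simpa using (hasDerivAt_pow 2 t).const_sub (r ^ 2)
    have hsq : HasDerivAt (fun u : ℝ => Real.sqrt (r ^ 2 - u ^ 2))
        (-t / Real.sqrt (r ^ 2 - t ^ 2)) t := by
      have := (Real.hasDerivAt_sqrt hpos.ne').comp t hinner
      refine this.congr_deriv ?_
      field_simp
    have hprod : HasDerivAt (fun u : ℝ => u * Real.sqrt (r ^ 2 - u ^ 2))
        (1 * Real.sqrt (r ^ 2 - t ^ 2) + t * (-t / Real.sqrt (r ^ 2 - t ^ 2))) t :=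
      (hasDerivAt_id t).mul hsq
    have hdivlt : t / r < 1 := (div_lt_one hr0).2 htr2
    have hdivgt : -1 < t / r := by
      rw [lt_div_iff₀ hr0]; linarith
    have hdiv : HasDerivAt (fun u : ℝ => u / r) (1 / r) t := by
      simpa using (hasDerivAt_id t).div_const r
    have harc : HasDerivAt (fun u : ℝ => r ^ 2 * Real.arcsin (u / r))
        (r ^ 2 * (1 / Real.sqrt (1 - (t / r) ^ 2) * (1 / r))) t :=
      (((Real.hasDerivAt_arcsin hdivgt.ne' hdivlt.ne).comp t hdiv)).const_mul (r ^ 2)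
    have hsum := hprod.add harc
    have heq : 1 * Real.sqrt (r ^ 2 - t ^ 2) + t * (-t / Real.sqrt (r ^ 2 - t ^ 2)) +
        r ^ 2 * (1 / Real.sqrt (1 - (t / r) ^ 2) * (1 / r)) = 2 * Real.sqrt (r ^ 2 - t ^ 2) := by
      have h1' : 1 - (t / r) ^ 2 = (r ^ 2 - t ^ 2) / r ^ 2 := by
        field_simp
      rw [h1', Real.sqrt_div' _ (by positivity), Real.sqrt_sq hr]
      have hS2 : Real.sqrt (r ^ 2 - t ^ 2) ^ 2 = r ^ 2 - t ^ 2 := Real.sq_sqrt hpos.le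
      field_simp
      linear_combination (-1 : ℝ) * hS2
    rw [heq] at hsum
    exact hsum.hasDerivWithinAt
  have hint : IntervalIntegrable (fun t => 2 * Real.sqrt (r ^ 2 - t ^ 2)) volume c r := by
    exact (continuous_const.mul ((continuous_const.sub (continuous_pow 2)).sqrt)).intervalIntegrable _ _
  have := intervalIntegral.integral_eq_sub_of_hasDeriv_right_of_le h2 hcont hderiv hint
  rw [this, hF]
  simp only
  rw [div_self hr0.ne', Real.arcsin_one, Real.arccos_eq_pi_div_two_sub_arcsin]
  rw [show r ^ 2 - r ^ 2 = 0 by ring, Real.sqrt_zero]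
  ring

lemma slice_vol (m : ℝ) : (volume {b : ℝ | b ^ 2 ≤ m}) = ENNReal.ofReal (2 * Real.sqrt m) := by
  rcases le_or_gt 0 m with hm | hm
  · have : {b : ℝ | b ^ 2 ≤ m} = Icc (-Real.sqrt m) (Real.sqrt m) := by
      ext b
      simp only [mem_setOf_eq, mem_Icc, ← abs_le]
      constructor
      · exact fun h => Real.abs_le_sqrt h
      · intro h
        calc b ^ 2 = |b| ^ 2 := (sq_abs b).symm
          _ ≤ Real.sqrt m ^ 2 := pow_le_pow_left₀ (abs_nonneg b) h 2
          _ = m := Real.sq_sqrt hm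
    rw [this, Real.volume_Icc]
    congr 1
    ring
  · have h0 : {b : ℝ | b ^ 2 ≤ m} = ∅ := by
      ext b; simp only [mem_setOf_eq, mem_empty_iff_false, iff_false, not_le]
      exact lt_of_lt_of_le hm (sq_nonneg b)
    rw [h0, Real.sqrt_eq_zero'.2 hm.le]
    simp

lemma f_cont (s D y : ℝ) :
    Continuous (fun a : ℝ => 2 * Real.sqrt (min (D ^ 2 - (a - s) ^ 2) (y ^ 2 - a ^ 2))) := by
  apply continuous_const.mul
  apply Continuous.sqrt
  exact Continuous.min (by continuity) (by continuity)

lemma area_fubini (s D y : ℝ) (hs : 0 < s) (hD : 0 < D) (hy0 : 0 ≤ y) :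
    (volume : Measure (ℝ × ℝ))
        {p : ℝ × ℝ | (p.1 - s) ^ 2 + p.2 ^ 2 ≤ D ^ 2 ∧ p.1 ^ 2 + p.2 ^ 2 ≤ y ^ 2} =
      ENNReal.ofReal (∫ a, 2 * Real.sqrt (min (D ^ 2 - (a - s) ^ 2) (y ^ 2 - a ^ 2))) := by
  set f : ℝ → ℝ := fun a => 2 * Real.sqrt (min (D ^ 2 - (a - s) ^ 2) (y ^ 2 - a ^ 2)) with hf
  have hTmeas : MeasurableSet
      {p : ℝ × ℝ | (p.1 - s) ^ 2 + p.2 ^ 2 ≤ D ^ 2 ∧ p.1 ^ 2 + p.2 ^ 2 ≤ y ^ 2} := by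
    have h1 : Measurable fun p : ℝ × ℝ => (p.1 - s) ^ 2 + p.2 ^ 2 := by measurability
    have h2 : Measurable fun p : ℝ × ℝ => p.1 ^ 2 + p.2 ^ 2 := by measurability
    exact (measurableSet_le h1 measurable_const).inter (measurableSet_le h2 measurable_const)
  rw [MeasureTheory.Measure.volume_eq_prod, MeasureTheory.Measure.prod_apply hTmeas]
  have hslice : ∀ a : ℝ,
      volume (Prod.mk a ⁻¹' {p : ℝ × ℝ | (p.1 - s) ^ 2 + p.2 ^ 2 ≤ D ^ 2 ∧
        p.1 ^ 2 + p.2 ^ 2 ≤ y ^ 2}) = ENNReal.ofReal (f a) := by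
    intro a
    have : (Prod.mk a ⁻¹' {p : ℝ × ℝ | (p.1 - s) ^ 2 + p.2 ^ 2 ≤ D ^ 2 ∧
        p.1 ^ 2 + p.2 ^ 2 ≤ y ^ 2}) = {b : ℝ | b ^ 2 ≤ min (D ^ 2 - (a - s) ^ 2) (y ^ 2 - a ^ 2)} := by
      ext b
      simp only [mem_preimage, mem_setOf_eq, le_min_iff]
      constructor <;> intro h <;> constructor <;> linarith [h.1, h.2]
    rw [this, slice_vol]
  simp_rw [hslice]
  have hint : Integrable f := by
    apply Continuous.integrable_of_hasCompactSupport (f_cont s D y)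
    apply HasCompactSupport.intro (isCompact_Icc (a := s - D) (b := s + D))
    intro a ha
    simp only [mem_Icc, not_and_or, not_le] at ha
    have : D ^ 2 - (a - s) ^ 2 < 0 := by rcases ha with h | h <;> nlinarith
    have hmin : min (D ^ 2 - (a - s) ^ 2) (y ^ 2 - a ^ 2) ≤ D ^ 2 - (a - s) ^ 2 := min_le_left _ _
    show 2 * Real.sqrt (min (D ^ 2 - (a - s) ^ 2) (y ^ 2 - a ^ 2)) = 0
    rw [Real.sqrt_eq_zero'.2 (by exact le_trans hmin (by linarith))]
    ring
  rw [← MeasureTheory.ofReal_integral_eq_lintegral_ofReal hint]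
  exact Filter.Eventually.of_forall fun a => by positivity

lemma area_value (s D y : ℝ) (hs : 0 < s) (hD : 0 < D) (hy1 : |s - D| ≤ y) (hy2 : y ≤ s + D) :
    ∫ a, 2 * Real.sqrt (min (D ^ 2 - (a - s) ^ 2) (y ^ 2 - a ^ 2)) =
      D ^ 2 * Real.arccos ((D ^ 2 + s ^ 2 - y ^ 2) / (2 * s * D)) +
        y ^ 2 * Real.arccos ((y ^ 2 + s ^ 2 - D ^ 2) / (2 * s * y)) -
        (1 / 2) * Real.sqrt (((y + s) ^ 2 - D ^ 2) * (D ^ 2 - (y - s) ^ 2)) := by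
  have hy0 : 0 ≤ y := le_trans (abs_nonneg _) hy1
  have habs := abs_le.1 hy1
  have hsq1 : (s - D) ^ 2 ≤ y ^ 2 := by
    rw [← sq_abs (s - D)]; exact pow_le_pow_left₀ (abs_nonneg _) hy1 2
  have hsq2 : y ^ 2 ≤ (s + D) ^ 2 := pow_le_pow_left₀ hy0 hy2 2
  set a₀ : ℝ := (s ^ 2 + y ^ 2 - D ^ 2) / (2 * s) with ha₀
  set u : ℝ := a₀ - s with hu
  set f : ℝ → ℝ := fun a => 2 * Real.sqrt (min (D ^ 2 - (a - s) ^ 2) (y ^ 2 - a ^ 2)) with hfdef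
  have h2s : (0:ℝ) < 2 * s := by linarith
  have ha₀l : s - D ≤ a₀ := by rw [ha₀, le_div_iff₀ h2s]; nlinarith
  have ha₀r : a₀ ≤ y := by rw [ha₀, div_le_iff₀ h2s]; nlinarith
  have ha₀l2 : -y ≤ a₀ := by rw [ha₀, le_div_iff₀ h2s]; nlinarith
  have hul : -D ≤ u := by rw [hu, ha₀, le_sub_iff_add_le, le_div_iff₀ h2s]; nlinarith
  have hur : u ≤ D := by rw [hu, ha₀, sub_le_iff_le_add, div_le_iff₀ h2s]; nlinarith
  have hsy : s - D ≤ y := habs.2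
  have hfi : ∀ a b : ℝ, IntervalIntegrable f volume a b :=
    fun a b => (f_cont s D y).intervalIntegrable a b
  have hDi : ∀ a b : ℝ, IntervalIntegrable (fun t => 2 * Real.sqrt (D ^ 2 - t ^ 2)) volume a b :=
    fun a b => (continuous_const.mul ((continuous_const.sub (continuous_pow 2)).sqrt)).intervalIntegrable a b
  -- support restriction
  have hsupp : ∀ a : ℝ, a ∉ Icc (s - D) y → f a = 0 := by
    intro a ha
    simp only [mem_Icc, not_and_or, not_le] at ha
    have hneg : min (D ^ 2 - (a - s) ^ 2) (y ^ 2 - a ^ 2) ≤ 0 := by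
      rcases ha with h | h
      · exact le_trans (min_le_left _ _) (by nlinarith)
      · exact le_trans (min_le_right _ _) (by nlinarith)
    show 2 * Real.sqrt _ = 0
    rw [Real.sqrt_eq_zero'.2 hneg]; ring
  have e0 : ∫ a, f a = (∫ a in (s - D)..a₀, f a) + ∫ a in a₀..y, f a := by
    rw [← MeasureTheory.setIntegral_eq_integral_of_forall_compl_eq_zero hsupp,
      MeasureTheory.integral_Icc_eq_integral_Ioc, ← intervalIntegral.integral_of_le hsy,
      ← intervalIntegral.integral_add_adjacent_intervals (hfi (s - D) a₀) (hfi a₀ y)]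
  -- left piece
  have hleft : ∫ a in (s - D)..a₀, f a = ∫ a in (s - D)..a₀, 2 * Real.sqrt (D ^ 2 - (a - s) ^ 2) := by
    apply intervalIntegral.integral_congr
    intro a ha
    rw [Set.uIcc_of_le ha₀l] at ha
    have h2 : a * (2 * s) ≤ s ^ 2 + y ^ 2 - D ^ 2 := by
      have := ha.2; rw [ha₀] at this; exact (le_div_iff₀ h2s).1 this
    show 2 * Real.sqrt (min (D ^ 2 - (a - s) ^ 2) (y ^ 2 - a ^ 2)) = 2 * Real.sqrt (D ^ 2 - (a - s) ^ 2)
    rw [min_eq_left (by nlinarith)]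
  have hcomp : ∫ a in (s - D)..a₀, 2 * Real.sqrt (D ^ 2 - (a - s) ^ 2) =
      ∫ t in (-D)..u, 2 * Real.sqrt (D ^ 2 - t ^ 2) := by
    have := intervalIntegral.integral_comp_sub_right
      (a := s - D) (b := a₀) (fun t => 2 * Real.sqrt (D ^ 2 - t ^ 2)) s
    rw [show s - D - s = -D by ring] at this
    exact this
  have hfull : ∫ t in (-D)..D, 2 * Real.sqrt (D ^ 2 - t ^ 2) = Real.pi * D ^ 2 := by
    have := sqrt_integral_key D (-D) hD.le (by linarith) (by linarith)
    rw [neg_div, div_self hD.ne', Real.arccos_neg_one] at this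
    rw [this, neg_sq, sub_self, Real.sqrt_zero]
    ring
  have hadj := intervalIntegral.integral_add_adjacent_intervals (hDi (-D) u) (hDi u D)
  have hu2 := sqrt_integral_key D u hD.le hul hur
  have e1 : ∫ a in (s - D)..a₀, f a =
      Real.pi * D ^ 2 - (D ^ 2 * Real.arccos (u / D) - u * Real.sqrt (D ^ 2 - u ^ 2)) := by
    rw [hleft, hcomp]
    rw [hfull] at hadj
    linarith [hu2, hadj]
  -- right piece
  have hright : ∫ a in a₀..y, f a = ∫ a in a₀..y, 2 * Real.sqrt (y ^ 2 - a ^ 2) := by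
    apply intervalIntegral.integral_congr
    intro a ha
    rw [Set.uIcc_of_le ha₀r] at ha
    have h2 : s ^ 2 + y ^ 2 - D ^ 2 ≤ a * (2 * s) := by
      have := ha.1; rw [ha₀] at this; exact (div_le_iff₀ h2s).1 this
    show 2 * Real.sqrt (min (D ^ 2 - (a - s) ^ 2) (y ^ 2 - a ^ 2)) = 2 * Real.sqrt (y ^ 2 - a ^ 2)
    rw [min_eq_right (by nlinarith)]
  have e2 : ∫ a in a₀..y, f a =
      y ^ 2 * Real.arccos (a₀ / y) - a₀ * Real.sqrt (y ^ 2 - a₀ ^ 2) := by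
    rw [hright]
    exact sqrt_integral_key y a₀ hy0 ha₀l2 ha₀r
  -- conversions
  have c1 : Real.arccos (u / D) = Real.pi - Real.arccos ((D ^ 2 + s ^ 2 - y ^ 2) / (2 * s * D)) := by
    have huD : u / D = -((D ^ 2 + s ^ 2 - y ^ 2) / (2 * s * D)) := by
      rw [hu, ha₀]; field_simp; ring
    rw [huD, Real.arccos_neg]
  have c2 : a₀ / y = (y ^ 2 + s ^ 2 - D ^ 2) / (2 * s * y) := by
    rw [ha₀, div_div]; ring
  have csqrt : D ^ 2 - u ^ 2 = y ^ 2 - a₀ ^ 2 := by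
    rw [hu, ha₀]; field_simp; ring
  have hP : ((y + s) ^ 2 - D ^ 2) * (D ^ 2 - (y - s) ^ 2) = 4 * (s ^ 2 * (y ^ 2 - a₀ ^ 2)) := by
    rw [ha₀]; field_simp; ring
  have cL : s * Real.sqrt (y ^ 2 - a₀ ^ 2) =
      Real.sqrt (((y + s) ^ 2 - D ^ 2) * (D ^ 2 - (y - s) ^ 2)) / 2 := by
    rw [hP, Real.sqrt_mul (by norm_num : (0:ℝ) ≤ 4),
      show Real.sqrt 4 = 2 by
        rw [show (4:ℝ) = 2 ^ 2 by norm_num, Real.sqrt_sq (by norm_num : (0:ℝ) ≤ 2)],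
      Real.sqrt_mul (sq_nonneg s), Real.sqrt_sq hs.le]
    ring
  rw [e0, e1, e2, c1, c2, csqrt]
  linear_combination Real.sqrt (y ^ 2 - a₀ ^ 2) * hu - cL

/-- Lemma 1 (middle region): if `Z` is uniform on the closed disk of radius `D` centered at
`x` with `‖x‖ > 0`, then for `|‖x‖ - D| ≤ y ≤ ‖x‖ + D` the probability that `‖Z‖ ≤ y` is
`B_{‖x‖}(y) / (π D²)`, where `B` is the lens-area function of equation (10). -/
theorem uniform_disk_dist_cdf_middle (D : ℝ) (hD : 0 < D) (x : EuclideanSpace ℝ (Fin 2))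
    (hx : 0 < ‖x‖) (y : ℝ) (hy₁ : |‖x‖ - D| ≤ y) (hy₂ : y ≤ ‖x‖ + D) :
    ((ENNReal.ofReal (Real.pi * D ^ 2))⁻¹ • volume.restrict (Metric.closedBall x D))
        {z : EuclideanSpace ℝ (Fin 2) | ‖z‖ ≤ y} =
      ENNReal.ofReal
        ((D ^ 2 * Real.arccos ((D ^ 2 + ‖x‖ ^ 2 - y ^ 2) / (2 * ‖x‖ * D)) +
            y ^ 2 * Real.arccos ((y ^ 2 + ‖x‖ ^ 2 - D ^ 2) / (2 * ‖x‖ * y)) -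
            (1 / 2) * Real.sqrt (((y + ‖x‖) ^ 2 - D ^ 2) * (D ^ 2 - (y - ‖x‖) ^ 2))) /
          (Real.pi * D ^ 2)) := by
  set s : ℝ := ‖x‖ with hsdef
  have hy0 : 0 ≤ y := le_trans (abs_nonneg _) hy₁
  set S : Set (EuclideanSpace ℝ (Fin 2)) := {z | ‖z‖ ≤ y} with hS
  have hSmeas : MeasurableSet S :=
    (isClosed_le continuous_norm continuous_const).measurableSet
  rw [Measure.smul_apply, Measure.restrict_apply hSmeas, smul_eq_mul]
  -- move the center to `s • e₀` via a reflection
  set x₀ : EuclideanSpace ℝ (Fin 2) := EuclideanSpace.single (0 : Fin 2) s with hx₀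
  have hnorm : ‖x₀‖ = ‖x‖ := by
    rw [hx₀, EuclideanSpace.norm_single, Real.norm_eq_abs, abs_norm]
  set F := Submodule.reflection (ℝ ∙ (x₀ - x))ᗮ with hF
  have hFx : F x₀ = x := Submodule.reflection_sub hnorm
  have hmpF : MeasurePreserving F := F.measurePreserving
  have hTmeas : MeasurableSet (S ∩ Metric.closedBall x D) :=
    hSmeas.inter measurableSet_closedBall
  have hpre : F ⁻¹' (S ∩ Metric.closedBall x D) = S ∩ Metric.closedBall x₀ D := by
    ext z
    simp only [mem_preimage, mem_inter_iff, hS, mem_setOf_eq, Metric.mem_closedBall]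
    rw [F.norm_map, ← hFx, F.dist_map]
  have hvol : volume (S ∩ Metric.closedBall x D) = volume (S ∩ Metric.closedBall x₀ D) := by
    rw [← hpre]; exact (hmpF.measure_preimage hTmeas.nullMeasurableSet).symm
  -- pass to coordinates
  set G := (MeasurableEquiv.toLp 2 (Fin 2 → ℝ)).symm.trans MeasurableEquiv.finTwoArrow with hG
  have hmpG : MeasurePreserving G :=
    (volume_preserving_finTwoArrow ℝ).comp (EuclideanSpace.volume_preserving_symm_measurableEquiv_toLp (Fin 2))
  set T : Set (ℝ × ℝ) := {p | (p.1 - s) ^ 2 + p.2 ^ 2 ≤ D ^ 2 ∧ p.1 ^ 2 + p.2 ^ 2 ≤ y ^ 2} with hT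
  have hTm : MeasurableSet T := by
    have h1 : Measurable fun p : ℝ × ℝ => (p.1 - s) ^ 2 + p.2 ^ 2 :=
      (((continuous_fst.sub continuous_const).pow 2).add (continuous_snd.pow 2)).measurable
    have h2 : Measurable fun p : ℝ × ℝ => p.1 ^ 2 + p.2 ^ 2 :=
      ((continuous_fst.pow 2).add (continuous_snd.pow 2)).measurable
    exact (measurableSet_le h1 measurable_const).inter (measurableSet_le h2 measurable_const)
  have hGz : ∀ z : EuclideanSpace ℝ (Fin 2), G z = (z 0, z 1) := by
    intro z
    rfl
  have hnormsq : ∀ (w : EuclideanSpace ℝ (Fin 2)) (c : ℝ), 0 ≤ c →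
      (‖w‖ ≤ c ↔ w 0 ^ 2 + w 1 ^ 2 ≤ c ^ 2) := by
    intro w c hc
    rw [EuclideanSpace.norm_eq, Fin.sum_univ_two, Real.sqrt_le_iff]
    simp [Real.norm_eq_abs, sq_abs, hc]
  have hpre2 : G ⁻¹' T = S ∩ Metric.closedBall x₀ D := by
    ext z
    simp only [mem_preimage, hGz, hT, mem_setOf_eq, mem_inter_iff, hS,
      Metric.mem_closedBall, dist_eq_norm]
    rw [hnormsq (z - x₀) D hD.le, hnormsq z y hy0]
    have h0 : (z - x₀) 0 = z 0 - s := by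
      rw [PiLp.sub_apply, hx₀, EuclideanSpace.single_apply]; simp
    have h1 : (z - x₀) 1 = z 1 := by
      rw [PiLp.sub_apply, hx₀, EuclideanSpace.single_apply]; simp
    rw [h0, h1]
    tauto
  have hvol2 : volume (S ∩ Metric.closedBall x₀ D) = volume T := by
    rw [← hpre2]; exact hmpG.measure_preimage hTm.nullMeasurableSet
  rw [hvol, hvol2, hT, area_fubini s D y hx hD hy0, area_value s D y hx hD hy₁ hy₂,
    ← ENNReal.div_eq_inv_mul, ← ENNReal.ofReal_div_of_pos (by positivity)]
end

section
/- Let D > 0 and d_g > 0, and let x be a point of the Euclidean plane ℝ². The Lebesgue area G(x) of the set difference (closed disk of radius D centered at x) \ (closed disk of radius d_g centered at the origin) satisfies: (i) if 0 ≤ ‖x‖ ≤ |D − d_g| then G(x) = πD² − π·(min{d_g, D})²; (ii) if |D − d_g| ≤ ‖x‖ ≤ D + d_g and ‖x‖ > 0 then G(x) = πD² − B_{‖x‖}(d_g); (iii) if ‖x‖ ≥ D + d_g then G(x) = πD². -/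
set_option maxHeartbeats 1000000


open MeasureTheory

section Helpers

open Real

/-- Fundamental theorem of calculus computation for the circular-segment integrand. -/
lemma seg_integral (r d : ℝ) (hr : 0 < r) (h1 : -r ≤ d) (h2 : d ≤ r) :
    ∫ a in d..r, 2 * Real.sqrt (r^2 - a^2) =
      r^2 * Real.arccos (d/r) - d * Real.sqrt (r^2 - d^2) := by
  set F : ℝ → ℝ := fun a => r^2 * Real.arcsin (a/r) + a * Real.sqrt (r^2 - a^2) with hF
  have hcont : Continuous F := by
    apply Continuous.add
    · exact continuous_const.mul (Real.continuous_arcsin.comp (continuous_id.div_const r))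
    · exact continuous_id.mul (Real.continuous_sqrt.comp (by continuity))
  have hderiv : ∀ a ∈ Set.Ioo d r, HasDerivAt F (2 * Real.sqrt (r^2 - a^2)) a := by
    intro a ha
    have har : -r < a := lt_of_le_of_lt h1 ha.1
    have hpos : 0 < r^2 - a^2 := by nlinarith [ha.2]
    have hu : Real.sqrt (r^2 - a^2) ^ 2 = r^2 - a^2 := Real.sq_sqrt hpos.le
    have hupos : 0 < Real.sqrt (r^2 - a^2) := Real.sqrt_pos.mpr hpos
    have hne1 : a / r ≠ -1 := by
      intro h; rw [div_eq_iff hr.ne'] at h; nlinarith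
    have hne2 : a / r ≠ 1 := by
      intro h; rw [div_eq_iff hr.ne'] at h; nlinarith [ha.2]
    have hd1 : HasDerivAt (fun y : ℝ => Real.arcsin (y / r))
        (1 / Real.sqrt (1 - (a/r)^2) * (1/r)) a := by
      exact (Real.hasDerivAt_arcsin hne1 hne2).comp a ((hasDerivAt_id a).div_const r)
    have hd2' : HasDerivAt (fun y : ℝ => r^2 - y^2) (-(2*a)) a := by
      simpa using (hasDerivAt_pow 2 a).const_sub (r^2)
    have hd2 : HasDerivAt (fun y : ℝ => Real.sqrt (r^2 - y^2))
        (1 / (2 * Real.sqrt (r^2 - a^2)) * (-(2*a))) a :=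
      (Real.hasDerivAt_sqrt hpos.ne').comp a hd2'
    have hd3 : HasDerivAt (fun y : ℝ => y * Real.sqrt (r^2 - y^2))
        (1 * Real.sqrt (r^2 - a^2) + a * (1 / (2 * Real.sqrt (r^2 - a^2)) * (-(2*a)))) a :=
      (hasDerivAt_id a).mul hd2
    have := (hd1.const_mul (r^2)).add hd3
    refine this.congr_deriv ?_
    symm
    have hsq : Real.sqrt (1 - (a/r)^2) = Real.sqrt (r^2 - a^2) / r := by
      rw [show (1 : ℝ) - (a/r)^2 = (r^2 - a^2)/r^2 by field_simp,
        Real.sqrt_div hpos.le, Real.sqrt_sq hr.le]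
    rw [hsq]
    rw [one_div_div]
    field_simp
    linear_combination hu
  have hint : IntervalIntegrable (fun a => 2 * Real.sqrt (r^2 - a^2)) volume d r :=
    (continuous_const.mul (Real.continuous_sqrt.comp (by continuity))).intervalIntegrable d r
  have := intervalIntegral.integral_eq_sub_of_hasDeriv_right_of_le h2
    hcont.continuousOn (fun a ha => (hderiv a ha).hasDerivWithinAt) hint
  rw [this, hF]
  simp only
  rw [div_self hr.ne', Real.arcsin_one, show r^2 - r^2 = 0 by ring, Real.sqrt_zero,
    Real.arccos]
  ring

/-- The area of a circular segment `{p | d ≤ p.1} ∩ (disk of radius r)`. -/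
lemma segVol (r d : ℝ) (hr : 0 < r) (h1 : -r ≤ d) (h2 : d ≤ r) :
    volume {p : ℝ × ℝ | d ≤ p.1 ∧ p.1^2 + p.2^2 ≤ r^2} =
      ENNReal.ofReal (r^2 * Real.arccos (d/r) - d * Real.sqrt (r^2 - d^2)) := by
  have hmeas : MeasurableSet {p : ℝ × ℝ | d ≤ p.1 ∧ p.1^2 + p.2^2 ≤ r^2} := by
    exact ((isClosed_le continuous_const continuous_fst).inter
      (isClosed_le ((continuous_fst.pow 2).add (continuous_snd.pow 2))
        continuous_const)).measurableSet
  rw [Measure.volume_eq_prod ℝ ℝ, Measure.prod_apply hmeas]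
  have hslice : (fun a => volume (Prod.mk a ⁻¹' {p : ℝ × ℝ | d ≤ p.1 ∧ p.1^2 + p.2^2 ≤ r^2}))
      = Set.indicator (Set.Icc d r) (fun a => ENNReal.ofReal (2 * Real.sqrt (r^2 - a^2))) := by
    funext a
    rw [Set.indicator_apply]
    split_ifs with h
    · have h' : 0 ≤ r^2 - a^2 := by nlinarith [h.1, h.2, abs_le.mpr ⟨le_trans h1 h.1, h.2⟩]
      have : Prod.mk a ⁻¹' {p : ℝ × ℝ | d ≤ p.1 ∧ p.1^2 + p.2^2 ≤ r^2}
          = Set.Icc (-Real.sqrt (r^2 - a^2)) (Real.sqrt (r^2 - a^2)) := by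
        ext b
        simp only [Set.mem_preimage, Set.mem_setOf_eq, Set.mem_Icc]
        constructor
        · rintro ⟨-, hb⟩
          have : |b| ≤ Real.sqrt (r^2 - a^2) := by
            rw [← Real.sqrt_sq_eq_abs]
            exact Real.sqrt_le_sqrt (by linarith)
          exact abs_le.mp this
        · intro hb
          refine ⟨h.1, ?_⟩
          have : |b| ≤ Real.sqrt (r^2 - a^2) := abs_le.mpr hb
          have := (sq_le_sq' hb.1 hb.2)
          have h2 := Real.sq_sqrt h'
          nlinarith
      rw [this, Real.volume_Icc]
      congr 1
      ring
    · rcases not_and_or.mp h with h | h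
      · push_neg at h
        have : Prod.mk a ⁻¹' {p : ℝ × ℝ | d ≤ p.1 ∧ p.1^2 + p.2^2 ≤ r^2} = ∅ := by
          ext b; simp only [Set.mem_preimage, Set.mem_setOf_eq, Set.mem_empty_iff_false,
            iff_false, not_and]
          intro hb; linarith
        simp [this]
      · push_neg at h
        have : Prod.mk a ⁻¹' {p : ℝ × ℝ | d ≤ p.1 ∧ p.1^2 + p.2^2 ≤ r^2} = ∅ := by
          ext b; simp only [Set.mem_preimage, Set.mem_setOf_eq, Set.mem_empty_iff_false,
            iff_false, not_and]
          intro hb; nlinarith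
        simp [this]
  rw [hslice]
  show (∫⁻ a, (Set.Icc d r).indicator (fun a => ENNReal.ofReal (2 * Real.sqrt (r^2 - a^2))) a) = _
  rw [lintegral_indicator measurableSet_Icc]
  rw [← ofReal_integral_eq_lintegral_ofReal]
  · rw [← seg_integral r d hr h1 h2, intervalIntegral.integral_of_le h2,
      integral_Icc_eq_integral_Ioc]
  · exact (Continuous.integrableOn_Icc (by fun_prop))
  · filter_upwards with a using by positivity

/-- The area of a full disk of radius `r` in `ℝ × ℝ`. -/
lemma diskVol (r : ℝ) (hr : 0 < r) :
    volume {p : ℝ × ℝ | p.1^2 + p.2^2 ≤ r^2} = ENNReal.ofReal (Real.pi * r^2) := by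
  have : {p : ℝ × ℝ | p.1^2 + p.2^2 ≤ r^2}
      = {p : ℝ × ℝ | -r ≤ p.1 ∧ p.1^2 + p.2^2 ≤ r^2} := by
    ext p
    simp only [Set.mem_setOf_eq]
    constructor
    · intro hp
      exact ⟨by nlinarith [sq_nonneg p.2, sq_nonneg (p.1 + r)], hp⟩
    · exact fun h => h.2
  rw [this, segVol r (-r) hr le_rfl (by linarith)]
  congr 1
  rw [neg_div, div_self hr.ne', Real.arccos_neg_one]
  rw [show r^2 - (-r)^2 = 0 by ring, Real.sqrt_zero]
  ring

/-- Volume of a closed ball in the Euclidean plane. -/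
lemma volume_closedBall_plane (c : EuclideanSpace ℝ (Fin 2)) (r : ℝ) (hr : 0 ≤ r) :
    volume (Metric.closedBall c r) = ENNReal.ofReal (Real.pi * r^2) := by
  rw [EuclideanSpace.volume_closedBall]
  simp only [Fintype.card_fin]
  rw [show ((2 : ℕ) : ℝ) / 2 + 1 = 2 by norm_num, Real.Gamma_two, div_one,
    Real.sq_sqrt Real.pi_nonneg, ← ENNReal.ofReal_pow hr, ← ENNReal.ofReal_mul (by positivity)]
  rw [mul_comm]

end Helpers


/-- Transport the disk-difference volume computation to `ℝ × ℝ` via an adapted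
orthonormal basis. -/
lemma plane_transport (x : EuclideanSpace ℝ (Fin 2)) (hs : 0 < ‖x‖) (D dg : ℝ)
    (hD : 0 < D) (hdg : 0 < dg) :
    volume (Metric.closedBall x D \ Metric.closedBall (0 : EuclideanSpace ℝ (Fin 2)) dg)
      = volume ({p : ℝ × ℝ | (p.1 - ‖x‖)^2 + p.2^2 ≤ D^2} \
          {p : ℝ × ℝ | p.1^2 + p.2^2 ≤ dg^2}) := by
  set s := ‖x‖ with hsdef
  have hs' : s ≠ 0 := ne_of_gt hs
  have hx2 : x 0 ^ 2 + x 1 ^ 2 = s ^ 2 := by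
    have h := EuclideanSpace.norm_eq x
    rw [Fin.sum_univ_two] at h
    have h2' : s^2 = ‖x 0‖^2 + ‖x 1‖^2 := by
      rw [hsdef, h, Real.sq_sqrt (by positivity)]
    rw [h2']
    simp [Real.norm_eq_abs, sq_abs]
  set w0 : EuclideanSpace ℝ (Fin 2) := (EuclideanSpace.equiv (Fin 2) ℝ).symm ![-(x 1), x 0]
    with hw0def
  set v : EuclideanSpace ℝ (Fin 2) := s⁻¹ • x with hvdef
  set w : EuclideanSpace ℝ (Fin 2) := s⁻¹ • w0 with hwdef
  have hinner : ∀ a b : EuclideanSpace ℝ (Fin 2),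
      inner ℝ a b = a 0 * b 0 + a 1 * b 1 := by
    intro a b
    rw [PiLp.inner_apply, Fin.sum_univ_two]
    simp [RCLike.inner_apply]
    ring
  have hv0 : v 0 = s⁻¹ * x 0 := rfl
  have hv1 : v 1 = s⁻¹ * x 1 := rfl
  have hw0' : w 0 = s⁻¹ * (-(x 1)) := rfl
  have hw1' : w 1 = s⁻¹ * (x 0) := rfl
  have hon : Orthonormal ℝ ![v, w] := by
    rw [orthonormal_iff_ite]
    intro i j
    fin_cases i <;> fin_cases j
    · rw [hinner]
      norm_num [Matrix.cons_val_zero, hinner]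
      rw [hv0, hv1]
      field_simp
      linear_combination hx2
    · norm_num [Matrix.cons_val_zero, Matrix.cons_val_one, Matrix.head_cons, hinner]
      rw [hv0, hv1, hw0', hw1']
      ring
    · norm_num [Matrix.cons_val_zero, Matrix.cons_val_one, Matrix.head_cons, hinner]
      rw [hv0, hv1, hw0', hw1']
      ring
    · rw [hinner]
      norm_num [Matrix.cons_val_one, Matrix.head_cons, hinner]
      rw [hw0', hw1']
      field_simp
      linear_combination hx2
  have hcard : Fintype.card (Fin 2) = Module.finrank ℝ (EuclideanSpace ℝ (Fin 2)) := by
    simp [finrank_euclideanSpace_fin]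
  obtain ⟨onb, honbcoe⟩ : ∃ onb : OrthonormalBasis (Fin 2) ℝ (EuclideanSpace ℝ (Fin 2)),
      ⇑onb = ![v, w] := by
    have hBcoe : ⇑(basisOfOrthonormalOfCardEqFinrank hon hcard) = ![v, w] :=
      coe_basisOfOrthonormalOfCardEqFinrank hon hcard
    refine ⟨(basisOfOrthonormalOfCardEqFinrank hon hcard).toOrthonormalBasis
      (by rw [hBcoe]; exact hon), ?_⟩
    rw [Module.Basis.coe_toOrthonormalBasis, hBcoe]
  have hreprx0 : onb.repr x 0 = s := by
    rw [OrthonormalBasis.repr_apply_apply, honbcoe]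
    simp only [Matrix.cons_val_zero]
    rw [hinner, hv0, hv1]
    field_simp
    linear_combination hx2
  have hreprx1 : onb.repr x 1 = 0 := by
    rw [OrthonormalBasis.repr_apply_apply, honbcoe]
    simp only [Matrix.cons_val_one, Matrix.head_cons, Matrix.cons_val_zero]
    rw [hinner, hw0', hw1']
    ring
  have hχmp : MeasurePreserving (fun p : EuclideanSpace ℝ (Fin 2) =>
      ((onb.repr p 0 : ℝ), (onb.repr p 1 : ℝ))) volume volume := by
    have := ((volume_preserving_finTwoArrow ℝ).comp
      (EuclideanSpace.volume_preserving_symm_measurableEquiv_toLp (Fin 2))).comp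
      onb.measurePreserving_repr
    exact this
  have hnorm : ∀ y : EuclideanSpace ℝ (Fin 2),
      ‖y‖^2 = (onb.repr y 0)^2 + (onb.repr y 1)^2 := by
    intro y
    have h1' : ‖y‖ = ‖onb.repr y‖ := (onb.repr.norm_map y).symm
    rw [h1', EuclideanSpace.norm_eq, Fin.sum_univ_two,
      Real.sq_sqrt (by positivity)]
    simp [sq_abs]
  have hSDmeas : MeasurableSet {p : ℝ × ℝ | (p.1 - s)^2 + p.2^2 ≤ D^2} :=
    (isClosed_le (by fun_prop) continuous_const).measurableSet
  have hSgmeas : MeasurableSet {p : ℝ × ℝ | p.1^2 + p.2^2 ≤ dg^2} :=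
    (isClosed_le (by fun_prop) continuous_const).measurableSet
  have hpre : (fun p : EuclideanSpace ℝ (Fin 2) =>
        ((onb.repr p 0 : ℝ), (onb.repr p 1 : ℝ))) ⁻¹'
        ({p : ℝ × ℝ | (p.1 - s)^2 + p.2^2 ≤ D^2} \ {p : ℝ × ℝ | p.1^2 + p.2^2 ≤ dg^2}) =
      Metric.closedBall x D \ Metric.closedBall (0 : EuclideanSpace ℝ (Fin 2)) dg := by
    ext p
    simp only [Set.mem_preimage, Set.mem_diff, Set.mem_setOf_eq, Metric.mem_closedBall]
    have hdx : dist p x ^ 2 = (onb.repr p 0 - s)^2 + (onb.repr p 1)^2 := by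
      rw [dist_eq_norm, hnorm (p - x), map_sub]
      simp only [PiLp.sub_apply, hreprx0, hreprx1]
      ring
    have hd0 : dist p 0 ^ 2 = (onb.repr p 0)^2 + (onb.repr p 1)^2 := by
      rw [dist_zero_right, hnorm p]
    constructor
    · rintro ⟨hA, hB⟩
      constructor
      · nlinarith [dist_nonneg (x := p) (y := x), hD.le]
      · intro hC
        apply hB
        nlinarith [dist_nonneg (x := p) (y := (0 : EuclideanSpace ℝ (Fin 2))), hdg.le]
    · rintro ⟨hA, hB⟩
      constructor
      · nlinarith [dist_nonneg (x := p) (y := x), hD.le]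
      · intro hC
        apply hB
        nlinarith [dist_nonneg (x := p) (y := (0 : EuclideanSpace ℝ (Fin 2))), hdg.le]
  rw [← hpre]
  exact hχmp.measure_preimage (hSDmeas.diff hSgmeas).nullMeasurableSet

/-- Equation (18): the area `G(x)` of the region `b(x,D) \ b(o,d_g)` over which the
interfering active radio units of a cloud centered at `x` are distributed. -/
theorem area_disk_diff_guard (D dg : ℝ) (hD : 0 < D) (hdg : 0 < dg)
    (x : EuclideanSpace ℝ (Fin 2)) :
    ((0 ≤ ‖x‖ ∧ ‖x‖ ≤ |D - dg| →
        (volume (Metric.closedBall x D \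
            Metric.closedBall (0 : EuclideanSpace ℝ (Fin 2)) dg)).toReal =
          Real.pi * D ^ 2 - Real.pi * (min dg D) ^ 2) ∧
      (|D - dg| ≤ ‖x‖ ∧ ‖x‖ ≤ D + dg ∧ 0 < ‖x‖ →
        (volume (Metric.closedBall x D \
            Metric.closedBall (0 : EuclideanSpace ℝ (Fin 2)) dg)).toReal =
          Real.pi * D ^ 2 -
            (D ^ 2 * Real.arccos ((D ^ 2 + ‖x‖ ^ 2 - dg ^ 2) / (2 * ‖x‖ * D)) +
              dg ^ 2 * Real.arccos ((dg ^ 2 + ‖x‖ ^ 2 - D ^ 2) / (2 * ‖x‖ * dg)) -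
              (1 / 2) * Real.sqrt (((dg + ‖x‖) ^ 2 - D ^ 2) * (D ^ 2 - (dg - ‖x‖) ^ 2)))) ∧
      (D + dg ≤ ‖x‖ →
        (volume (Metric.closedBall x D \
            Metric.closedBall (0 : EuclideanSpace ℝ (Fin 2)) dg)).toReal =
          Real.pi * D ^ 2)) := by
  refine ⟨?_, ?_, ?_⟩
  · -- Case (i): one disk contains the other
    rintro ⟨-, hle⟩
    rcases le_or_gt dg D with hcase | hcase
    · rw [abs_of_nonneg (by linarith)] at hle
      have hsub : Metric.closedBall (0 : EuclideanSpace ℝ (Fin 2)) dg ⊆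
          Metric.closedBall x D := by
        intro p hp
        have hp' : ‖p‖ ≤ dg := mem_closedBall_zero_iff.mp hp
        rw [Metric.mem_closedBall]
        calc dist p x ≤ dist p 0 + dist 0 x := dist_triangle p 0 x
          _ = ‖p‖ + ‖x‖ := by rw [dist_zero_right, dist_zero_left]
          _ ≤ D := by linarith
      rw [measure_diff hsub Metric.isClosed_closedBall.measurableSet.nullMeasurableSet
        (by rw [volume_closedBall_plane _ _ hdg.le]; exact ENNReal.ofReal_ne_top),
        volume_closedBall_plane _ _ hD.le, volume_closedBall_plane _ _ hdg.le,
        ← ENNReal.ofReal_sub _ (by positivity),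
        ENNReal.toReal_ofReal (by nlinarith [mul_le_mul_of_nonneg_left (by nlinarith : dg^2 ≤ D^2) Real.pi_pos.le]), min_eq_left hcase]
    · rw [abs_of_neg (by linarith)] at hle
      have hsub : Metric.closedBall x D ⊆
          Metric.closedBall (0 : EuclideanSpace ℝ (Fin 2)) dg := by
        intro p hp
        have hp' : dist p x ≤ D := Metric.mem_closedBall.mp hp
        rw [Metric.mem_closedBall]
        calc dist p 0 ≤ dist p x + dist x 0 := dist_triangle p x 0
          _ = dist p x + ‖x‖ := by rw [dist_zero_right]
          _ ≤ dg := by linarith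
      rw [Set.diff_eq_empty.mpr hsub, min_eq_right hcase.le]
      simp
  · -- Case (ii): proper lens intersection
    rintro ⟨h1, h2, hs⟩
    set s := ‖x‖ with hsdef
    obtain ⟨h1a, h1b⟩ := abs_le.mp h1
    -- chord positions
    obtain ⟨l, hldef⟩ : ∃ l : ℝ, l = (s^2 + dg^2 - D^2) / (2*s) := ⟨_, rfl⟩
    obtain ⟨m, hmdef⟩ : ∃ m : ℝ, m = (s^2 + D^2 - dg^2) / (2*s) := ⟨_, rfl⟩
    have hlm : l + m = s := by rw [hldef, hmdef]; field_simp; ring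
    have hlub : l ≤ dg := by
      rw [hldef, div_le_iff₀ (by linarith)]
      nlinarith
    have hllb : -dg ≤ l := by
      rw [hldef, le_div_iff₀ (by linarith)]
      nlinarith
    have hmub : m ≤ D := by
      rw [hmdef, div_le_iff₀ (by linarith)]
      nlinarith
    have hmlb : -D ≤ m := by
      rw [hmdef, le_div_iff₀ (by linarith)]
      nlinarith
    have hkeyl : 2*s*l = s^2 + dg^2 - D^2 := by rw [hldef]; field_simp
    have hkeym : 2*s*m = s^2 + D^2 - dg^2 := by rw [hmdef]; field_simp
    have hvol := plane_transport x hs D dg hD hdg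
    rw [← hsdef] at hvol
    set SD : Set (ℝ × ℝ) := {p | (p.1 - s)^2 + p.2^2 ≤ D^2} with hSDdef
    set Sg : Set (ℝ × ℝ) := {p | p.1^2 + p.2^2 ≤ dg^2} with hSgdef
    have hSDmeas : MeasurableSet SD :=
      (isClosed_le (by fun_prop) continuous_const).measurableSet
    have hSgmeas : MeasurableSet Sg :=
      (isClosed_le (by fun_prop) continuous_const).measurableSet
    have hs' : s ≠ 0 := ne_of_gt hs
    -- compute the lens volume
    set A : Set (ℝ × ℝ) := {p | l ≤ p.1 ∧ p.1^2 + p.2^2 ≤ dg^2} with hAdef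
    set Bs : Set (ℝ × ℝ) := {p | p.1 ≤ l ∧ (p.1 - s)^2 + p.2^2 ≤ D^2} with hBsdef
    have hlens : SD ∩ Sg = A ∪ Bs := by
      ext p
      simp only [hSDdef, hSgdef, hAdef, hBsdef, Set.mem_inter_iff, Set.mem_union,
        Set.mem_setOf_eq]
      constructor
      · rintro ⟨hpD, hpg⟩
        rcases le_total l p.1 with h | h
        · exact Or.inl ⟨h, hpg⟩
        · exact Or.inr ⟨h, hpD⟩
      · rintro (⟨h, hpg⟩ | ⟨h, hpD⟩)
        · constructor
          · nlinarith [mul_le_mul_of_nonneg_left h (by linarith : (0:ℝ) ≤ 2*s)]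
          · exact hpg
        · constructor
          · exact hpD
          · nlinarith [mul_le_mul_of_nonneg_left h (by linarith : (0:ℝ) ≤ 2*s)]
    have hAvol : volume A =
        ENNReal.ofReal (dg^2 * Real.arccos (l/dg) - l * Real.sqrt (dg^2 - l^2)) :=
      segVol dg l hdg hllb hlub
    have hTmp : MeasurePreserving (Prod.map (fun t : ℝ => s - t) (id : ℝ → ℝ))
        volume volume := by
      rw [Measure.volume_eq_prod ℝ ℝ]
      have h1 := Measure.measurePreserving_neg (volume : Measure ℝ)
      have h2 := measurePreserving_add_left (volume : Measure ℝ) s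
      have h3 : MeasurePreserving (fun t : ℝ => s - t) volume volume := by
        simpa [Function.comp_def, sub_eq_add_neg] using h2.comp h1
      exact h3.prod (MeasurePreserving.id volume)
    have hBspre : Bs = (Prod.map (fun t : ℝ => s - t) (id : ℝ → ℝ)) ⁻¹'
        {p : ℝ × ℝ | m ≤ p.1 ∧ p.1^2 + p.2^2 ≤ D^2} := by
      ext p
      simp only [hBsdef, Set.mem_preimage, Prod.map_fst, Prod.map_snd, Prod.map_apply, id_eq, Set.mem_setOf_eq]
      constructor
      · rintro ⟨h, hpD⟩
        refine ⟨by linarith [hlm], by nlinarith⟩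
      · rintro ⟨h, hpD⟩
        refine ⟨by linarith [hlm], by nlinarith⟩
    have hBsvol : volume Bs =
        ENNReal.ofReal (D^2 * Real.arccos (m/D) - m * Real.sqrt (D^2 - m^2)) := by
      rw [hBspre, hTmp.measure_preimage]
      · exact segVol D m hD hmlb hmub
      · exact ((isClosed_le continuous_const continuous_fst).inter
          (isClosed_le ((continuous_fst.pow 2).add (continuous_snd.pow 2))
            continuous_const)).measurableSet.nullMeasurableSet
    have hABnull : volume (A ∩ Bs) = 0 := by
      have hsub : A ∩ Bs ⊆ {p : ℝ × ℝ | p.1 = l} := by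
        rintro p ⟨hpA, hpB⟩
        exact le_antisymm hpB.1 hpA.1
      refine measure_mono_null hsub ?_
      have : {p : ℝ × ℝ | p.1 = l} = {l} ×ˢ (Set.univ : Set ℝ) := by
        ext p
        simp only [Set.mem_setOf_eq, Set.mem_prod, Set.mem_singleton_iff, Set.mem_univ, and_true]
      rw [this, Measure.volume_eq_prod ℝ ℝ, Measure.prod_prod, Real.volume_singleton,
        zero_mul]
    have hlensvol : volume (SD ∩ Sg) =
        ENNReal.ofReal (dg^2 * Real.arccos (l/dg) - l * Real.sqrt (dg^2 - l^2)) +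
        ENNReal.ofReal (D^2 * Real.arccos (m/D) - m * Real.sqrt (D^2 - m^2)) := by
      rw [hlens, measure_union₀ _ hABnull, hAvol, hBsvol]
      exact ((isClosed_le continuous_fst continuous_const).inter
        (isClosed_le ((((continuous_fst.sub continuous_const).pow 2)).add
          (continuous_snd.pow 2)) continuous_const)).measurableSet.nullMeasurableSet
    have hSDvol : volume SD = ENNReal.ofReal (Real.pi * D^2) := by
      have hTmp2 : MeasurePreserving (Prod.map (fun t : ℝ => t - s) (id : ℝ → ℝ))
          volume volume := by
        rw [Measure.volume_eq_prod ℝ ℝ]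
        have h3 : MeasurePreserving (fun t : ℝ => t - s) volume volume := by
          simpa [sub_eq_add_neg] using measurePreserving_add_right (volume : Measure ℝ) (-s)
        exact h3.prod (MeasurePreserving.id volume)
      have : SD = (Prod.map (fun t : ℝ => t - s) (id : ℝ → ℝ)) ⁻¹'
          {p : ℝ × ℝ | p.1^2 + p.2^2 ≤ D^2} := by
        ext p
        simp only [hSDdef, Set.mem_preimage, Prod.map_fst, Prod.map_snd, Prod.map_apply, id_eq, Set.mem_setOf_eq]
      rw [this, hTmp2.measure_preimage]
      · exact diskVol D hD
      · exact (isClosed_le ((continuous_fst.pow 2).add (continuous_snd.pow 2))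
          continuous_const).measurableSet.nullMeasurableSet
    -- nonnegativity of the segment areas
    have haA : 0 ≤ dg^2 * Real.arccos (l/dg) - l * Real.sqrt (dg^2 - l^2) := by
      rw [← seg_integral dg l hdg hllb hlub]
      exact intervalIntegral.integral_nonneg hlub (fun u _ => by positivity)
    have haB : 0 ≤ D^2 * Real.arccos (m/D) - m * Real.sqrt (D^2 - m^2) := by
      rw [← seg_integral D m hD hmlb hmub]
      exact intervalIntegral.integral_nonneg hmub (fun u _ => by positivity)
    -- sum of segments is at most the disk
    have hlens_le : volume (SD ∩ Sg) ≤ volume SD := measure_mono Set.inter_subset_left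
    have hsum_le : (dg^2 * Real.arccos (l/dg) - l * Real.sqrt (dg^2 - l^2)) +
        (D^2 * Real.arccos (m/D) - m * Real.sqrt (D^2 - m^2)) ≤ Real.pi * D^2 := by
      rw [hlensvol, hSDvol, ← ENNReal.ofReal_add haA haB] at hlens_le
      exact (ENNReal.ofReal_le_ofReal_iff (by positivity)).mp hlens_le
    have hdiffvol : volume (SD \ Sg) = volume SD - volume (SD ∩ Sg) := by
      rw [← Set.diff_self_inter]
      refine measure_diff Set.inter_subset_left
        (hSDmeas.inter hSgmeas).nullMeasurableSet ?_
      rw [hlensvol]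
      exact ENNReal.add_ne_top.mpr ⟨ENNReal.ofReal_ne_top, ENNReal.ofReal_ne_top⟩
    rw [hvol, hdiffvol, hSDvol, hlensvol, ← ENNReal.ofReal_add haA haB,
      ← ENNReal.ofReal_sub _ (by positivity), ENNReal.toReal_ofReal (by linarith)]
    -- final algebraic identification
    have hargl : l / dg = (dg^2 + s^2 - D^2) / (2*s*dg) := by
      rw [hldef]; field_simp; ring
    have hargm : m / D = (D^2 + s^2 - dg^2) / (2*s*D) := by
      rw [hmdef]; field_simp; ring
    have hDm : D^2 - m^2 = dg^2 - l^2 := by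
      rw [hldef, hmdef]; field_simp; ring
    have hP : ((dg + s)^2 - D^2) * (D^2 - (dg - s)^2) = (2*s)^2 * (dg^2 - l^2) := by
      rw [hldef]; field_simp; ring
    have hsqrtP : Real.sqrt (((dg + s)^2 - D^2) * (D^2 - (dg - s)^2))
        = 2 * s * Real.sqrt (dg^2 - l^2) := by
      rw [hP, Real.sqrt_mul (sq_nonneg (2*s)), Real.sqrt_sq (by linarith)]
    rw [hargl, hargm, hDm, hsqrtP]
    linear_combination Real.sqrt (dg^2 - l^2) * hlm
  · -- Case (iii): disjoint disks
    intro hge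
    have hnull : volume (Metric.closedBall x D ∩
        Metric.closedBall (0 : EuclideanSpace ℝ (Fin 2)) dg) = 0 := by
      have hsub : Metric.closedBall x D ∩
          Metric.closedBall (0 : EuclideanSpace ℝ (Fin 2)) dg ⊆
          Metric.sphere (0 : EuclideanSpace ℝ (Fin 2)) dg := by
        rintro p ⟨hp1, hp2⟩
        rw [Metric.mem_closedBall] at hp1 hp2
        rw [Metric.mem_sphere]
        have h1 : ‖x‖ ≤ dist x p + dist p 0 := by
          calc ‖x‖ = dist x 0 := (dist_zero_right x).symm
            _ ≤ dist x p + dist p 0 := dist_triangle x p 0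
        rw [dist_comm x p] at h1
        linarith
      exact measure_mono_null hsub (Measure.addHaar_sphere volume 0 dg)
    rw [measure_diff_null' hnull, volume_closedBall_plane _ _ hD.le,
      ENNReal.toReal_ofReal (by positivity)]
end

section
/- Let a > 0, T > 0, c ≥ 0, β > 0, and let n ≥ 1 be a natural number. Define the weight w(x) = 1 − (1 − e^{−c·x^β})^n for x ≥ 0. Then ∫_0^T x·e^{−a·x}·w(x) dx ≥ (a/2)·∫_0^T x²·e^{−a·x}·w(x) dx. -/
/-- Inequality (43) in the proof of Theorem 3, with the Alzer weight
`w(x) = 1 - (1 - e^{-c x^β})^n`. -/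
theorem weighted_truncated_moment_inequality (a : ℝ) (ha : 0 < a) (T : ℝ) (hT : 0 < T)
    (c : ℝ) (hc : 0 ≤ c) (β : ℝ) (hβ : 0 < β) (n : ℕ) (hn : 1 ≤ n) :
    (a / 2) * (∫ x in (0 : ℝ)..T,
        x ^ 2 * Real.exp (-(a * x)) * (1 - (1 - Real.exp (-(c * x ^ β))) ^ n)) ≤
      ∫ x in (0 : ℝ)..T,
        x * Real.exp (-(a * x)) * (1 - (1 - Real.exp (-(c * x ^ β))) ^ n) := by
  set W : ℝ → ℝ := fun x => 1 - (1 - Real.exp (-(c * x ^ β))) ^ n with hWdef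
  set ψ : ℝ → ℝ := fun x =>
    -(x ^ (β + 1) * Real.exp (-(a * x)) *
      ((n : ℝ) * (1 - Real.exp (-(c * x ^ β))) ^ (n - 1) * Real.exp (-(c * x ^ β)) * (c * β)) / 2)
    with hψdef
  set φ : ℝ → ℝ := fun x =>
    x * Real.exp (-(a * x)) * W x - a / 2 * (x ^ 2 * Real.exp (-(a * x)) * W x) with hφdef
  set g : ℝ → ℝ := fun x => x ^ 2 / 2 * Real.exp (-(a * x)) * W x with hgdef
  -- continuity facts
  have hrpow : Continuous fun x : ℝ => x ^ β :=
    continuous_iff_continuousAt.mpr fun x => Real.continuousAt_rpow_const x β (Or.inr hβ.le)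
  have hrpow' : Continuous fun x : ℝ => x ^ (β + 1) :=
    continuous_iff_continuousAt.mpr fun x =>
      Real.continuousAt_rpow_const x (β + 1) (Or.inr (by linarith))
  have hE : Continuous fun x : ℝ => Real.exp (-(c * x ^ β)) :=
    ((continuous_const.mul hrpow).neg).rexp
  have hA : Continuous fun x : ℝ => Real.exp (-(a * x)) :=
    ((continuous_const.mul continuous_id).neg).rexp
  have hWc : Continuous W := continuous_const.sub ((continuous_const.sub hE).pow n)
  have hψc : Continuous ψ := by
    apply Continuous.neg
    apply Continuous.div_const
    exact (hrpow'.mul hA).mul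
      ((((continuous_const.mul ((continuous_const.sub hE).pow (n - 1))).mul hE)).mul continuous_const)
  have hφc : Continuous φ := by
    apply Continuous.sub
    · exact (continuous_id.mul hA).mul hWc
    · exact continuous_const.mul (((continuous_pow 2).mul hA).mul hWc)
  have hgc : Continuous g := (((continuous_pow 2).div_const 2).mul hA).mul hWc
  -- pointwise bounds on the weight
  have hEle : ∀ x : ℝ, 0 ≤ x → Real.exp (-(c * x ^ β)) ≤ 1 := fun x hx => by
    rw [Real.exp_le_one_iff]
    have := Real.rpow_nonneg hx β
    nlinarith [mul_nonneg hc this]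
  have h1E : ∀ x : ℝ, 0 ≤ x → 0 ≤ 1 - Real.exp (-(c * x ^ β)) := fun x hx => by
    linarith [hEle x hx]
  have hWnonneg : ∀ x : ℝ, 0 ≤ x → 0 ≤ W x := fun x hx => by
    have h1 := h1E x hx
    have h2 : Real.exp (-(c * x ^ β)) > 0 := Real.exp_pos _
    have : (1 - Real.exp (-(c * x ^ β))) ^ n ≤ 1 := pow_le_one₀ h1 (by linarith)
    simp only [hWdef]; linarith
  -- derivative of g on the interior
  have hderiv : ∀ x ∈ Set.Ioo (0 : ℝ) T, HasDerivAt g (φ x + ψ x) x := by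
    intro x hx
    have hx0 : (0 : ℝ) < x := hx.1
    have h1 : HasDerivAt (fun y : ℝ => y ^ β) (β * x ^ (β - 1)) x :=
      Real.hasDerivAt_rpow_const (Or.inl hx0.ne')
    have h2 : HasDerivAt (fun y : ℝ => -(c * y ^ β)) (-(c * (β * x ^ (β - 1)))) x :=
      (h1.const_mul c).neg
    have h3 : HasDerivAt (fun y : ℝ => Real.exp (-(c * y ^ β)))
        (Real.exp (-(c * x ^ β)) * -(c * (β * x ^ (β - 1)))) x := h2.exp
    have h4 : HasDerivAt (fun y : ℝ => 1 - Real.exp (-(c * y ^ β)))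
        (-(Real.exp (-(c * x ^ β)) * -(c * (β * x ^ (β - 1))))) x := h3.const_sub 1
    have h5 : HasDerivAt (fun y : ℝ => (1 - Real.exp (-(c * y ^ β))) ^ n)
        ((n : ℝ) * (1 - Real.exp (-(c * x ^ β))) ^ (n - 1) *
          -(Real.exp (-(c * x ^ β)) * -(c * (β * x ^ (β - 1))))) x := h4.pow n
    have hW : HasDerivAt W
        (-((n : ℝ) * (1 - Real.exp (-(c * x ^ β))) ^ (n - 1) *
          -(Real.exp (-(c * x ^ β)) * -(c * (β * x ^ (β - 1)))))) x := h5.const_sub 1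
    have hAx : HasDerivAt (fun y : ℝ => Real.exp (-(a * y))) (Real.exp (-(a * x)) * -a) x := by
      have : HasDerivAt (fun y : ℝ => -(a * y)) (-a) x := by
        simpa using ((hasDerivAt_id x).const_mul a).fun_neg
      exact this.exp
    have hsq : HasDerivAt (fun y : ℝ => y ^ 2 / 2) x x := by
      have := (hasDerivAt_pow 2 x).div_const 2
      simpa using this
    have hg' : HasDerivAt g
        ((x * Real.exp (-(a * x)) + x ^ 2 / 2 * (Real.exp (-(a * x)) * -a)) * W x
          + x ^ 2 / 2 * Real.exp (-(a * x)) *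
            -((n : ℝ) * (1 - Real.exp (-(c * x ^ β))) ^ (n - 1) *
              -(Real.exp (-(c * x ^ β)) * -(c * (β * x ^ (β - 1)))))) x := by
      exact (hsq.mul hAx).mul hW
    convert hg' using 1
    have hsplit : x ^ (β + 1) = x ^ 2 * x ^ (β - 1) := by
      rw [← Real.rpow_natCast x 2, ← Real.rpow_add hx0]
      ring_nf
    simp only [hφdef, hψdef, hsplit]
    ring
  -- FTC
  have hψint : IntervalIntegrable ψ MeasureTheory.volume 0 T := hψc.intervalIntegrable 0 T
  have hφint : IntervalIntegrable φ MeasureTheory.volume 0 T := hφc.intervalIntegrable 0 T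
  have hFTC : ∫ x in (0 : ℝ)..T, (φ x + ψ x) = g T - g 0 :=
    intervalIntegral.integral_eq_sub_of_hasDerivAt_of_le hT.le hgc.continuousOn hderiv
      (hφint.add hψint)
  have hg0 : g 0 = 0 := by simp [hgdef]
  have hgT : 0 ≤ g T := by
    have := hWnonneg T hT.le
    positivity
  have hψnonpos : ∫ x in (0 : ℝ)..T, ψ x ≤ 0 := by
    have hneg : 0 ≤ ∫ x in (0 : ℝ)..T, (fun x => -ψ x) x := by
      apply intervalIntegral.integral_nonneg hT.le
      intro x hx
      have hx0 : (0 : ℝ) ≤ x := hx.1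
      have h1 := h1E x hx0
      have h2 : (0 : ℝ) ≤ x ^ (β + 1) := Real.rpow_nonneg hx0 _
      have h3 : (0 : ℝ) ≤ Real.exp (-(a * x)) := (Real.exp_pos _).le
      have h4 : (0 : ℝ) ≤ Real.exp (-(c * x ^ β)) := (Real.exp_pos _).le
      have h5 : (0 : ℝ) ≤ (1 - Real.exp (-(c * x ^ β))) ^ (n - 1) := pow_nonneg h1 _
      simp only [hψdef, neg_neg]
      positivity
    simp only at hneg
    rw [intervalIntegral.integral_neg] at hneg
    linarith
  have hsum : ∫ x in (0 : ℝ)..T, (φ x + ψ x)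
      = (∫ x in (0 : ℝ)..T, φ x) + ∫ x in (0 : ℝ)..T, ψ x :=
    intervalIntegral.integral_add hφint hψint
  have hφnonneg : 0 ≤ ∫ x in (0 : ℝ)..T, φ x := by
    have : (∫ x in (0 : ℝ)..T, φ x) + ∫ x in (0 : ℝ)..T, ψ x = g T - g 0 := by
      rw [← hsum]; exact hFTC
    rw [hg0] at this
    linarith
  -- split φ
  have hint1 : IntervalIntegrable (fun x => x * Real.exp (-(a * x)) * W x)
      MeasureTheory.volume 0 T := ((continuous_id.mul hA).mul hWc).intervalIntegrable 0 T
  have hint2 : IntervalIntegrable (fun x => a / 2 * (x ^ 2 * Real.exp (-(a * x)) * W x))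
      MeasureTheory.volume 0 T :=
    (continuous_const.mul (((continuous_pow 2).mul hA).mul hWc)).intervalIntegrable 0 T
  have hφeq : ∫ x in (0 : ℝ)..T, φ x
      = (∫ x in (0 : ℝ)..T, x * Real.exp (-(a * x)) * W x)
        - ∫ x in (0 : ℝ)..T, a / 2 * (x ^ 2 * Real.exp (-(a * x)) * W x) :=
    intervalIntegral.integral_sub hint1 hint2
  rw [hφeq] at hφnonneg
  rw [intervalIntegral.integral_const_mul] at hφnonneg
  simp only [hWdef] at hφnonneg
  linarith
end

section
/- Let b > 0 and D > 0, and let w : ℝ → ℝ be nonnegative, antitone (non-increasing) on [0, D], and integrable on [0, D]. Then the function p ↦ ∫_0^D p·r·e^{−b·p·r²}·w(r) dr is concave on the interval [0, ∞). -/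
open MeasureTheory

/-- Explicit antiderivative computation: `∫_0^D c r e^{-b c r²} dr = (1 - e^{-b c D²})/(2b)`. -/
lemma hit_aux_integral (b c D : ℝ) (hb : 0 < b) :
    ∫ r in (0 : ℝ)..D, c * r * Real.exp (-(b * c * r ^ 2))
      = (1 - Real.exp (-(b * c * D ^ 2))) / (2 * b) := by
  have h := intervalIntegral.integral_eq_sub_of_hasDerivAt
    (f := fun r : ℝ => -Real.exp (-(b * c * r ^ 2)) / (2 * b))
    (f' := fun r : ℝ => c * r * Real.exp (-(b * c * r ^ 2)))
    (a := 0) (b := D)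
    (fun r _ => by
      have h1 : HasDerivAt (fun r : ℝ => -(b * c * r ^ 2)) (-(b * c * (2 * r))) r := by
        simpa using ((hasDerivAt_pow 2 r).const_mul (b * c)).fun_neg
      have h2 := (h1.exp).fun_neg.div_const (2 * b)
      refine h2.congr_deriv ?_
      field_simp [hb.ne'])
    (by
      apply Continuous.intervalIntegrable
      continuity)
  rw [h]
  simp only [ne_eq, OfNat.ofNat_ne_zero, not_false_eq_true, zero_pow, mul_zero, neg_zero,
    Real.exp_zero]
  field_simp
  ring

/-- Single-crossing property of the "concavity defect" of `c ↦ c e^{-b c r²}`: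
there is a crossing radius `r₀` such that the defect is nonnegative before it and
nonpositive after it. -/
lemma hit_single_crossing (b p q t s D : ℝ) (hb : 0 < b) (hp : 0 ≤ p) (hq : 0 ≤ q)
    (ht : 0 ≤ t) (hs : 0 ≤ s) (hts : t + s = 1) (hD : 0 ≤ D) :
    ∃ r₀ ∈ Set.Icc (0 : ℝ) D,
      (∀ r, 0 ≤ r → r < r₀ →
        0 ≤ (t * p + s * q) * Real.exp (-(b * (t * p + s * q) * r ^ 2))
            - t * p * Real.exp (-(b * p * r ^ 2)) - s * q * Real.exp (-(b * q * r ^ 2))) ∧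
      (∀ r, r₀ < r → r ≤ D →
        (t * p + s * q) * Real.exp (-(b * (t * p + s * q) * r ^ 2))
            - t * p * Real.exp (-(b * p * r ^ 2)) - s * q * Real.exp (-(b * q * r ^ 2)) < 0) := by
  set m : ℝ := t * p + s * q with hm
  set ψ : ℝ → ℝ := fun r => m * Real.exp (-(b * m * r ^ 2))
      - t * p * Real.exp (-(b * p * r ^ 2)) - s * q * Real.exp (-(b * q * r ^ 2)) with hψ
  set φ : ℝ → ℝ := fun u => t * p * Real.exp ((m - p) * u) + s * q * Real.exp ((m - q) * u) with hφ
  -- factorization: ψ r = (m - φ (b r²)) e^{-b m r²}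
  have hfact : ∀ r : ℝ, ψ r = (m - φ (b * r ^ 2)) * Real.exp (-(b * m * r ^ 2)) := by
    intro r
    have e1 : Real.exp ((m - p) * (b * r ^ 2)) * Real.exp (-(b * m * r ^ 2))
        = Real.exp (-(b * p * r ^ 2)) := by
      rw [← Real.exp_add]; congr 1; ring
    have e2 : Real.exp ((m - q) * (b * r ^ 2)) * Real.exp (-(b * m * r ^ 2))
        = Real.exp (-(b * q * r ^ 2)) := by
      rw [← Real.exp_add]; congr 1; ring
    simp only [hψ, hφ]
    rw [← e1, ← e2]
    ring
  have hφ0 : φ 0 = m := by simp [hφ, hm]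
  -- convexity step: once φ exceeds m it stays above m
  have hφstep : ∀ u₁ u₂ : ℝ, 0 ≤ u₁ → u₁ ≤ u₂ → m < φ u₁ → m < φ u₂ := by
    intro u₁ u₂ hu₁ h12 hlt
    rcases eq_or_lt_of_le h12 with rfl | h12
    · exact hlt
    have hu₁pos : 0 < u₁ := by
      rcases eq_or_lt_of_le hu₁ with rfl | h
      · rw [hφ0] at hlt; exact absurd hlt (lt_irrefl m)
      · exact h
    have hu₂pos : 0 < u₂ := lt_trans hu₁pos h12
    set θ : ℝ := u₁ / u₂ with hθ
    have hθpos : 0 < θ := div_pos hu₁pos hu₂pos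
    have hθlt : θ < 1 := (div_lt_one hu₂pos).2 h12
    have hθu : θ * u₂ = u₁ := by rw [hθ, div_mul_cancel₀ _ (ne_of_gt hu₂pos)]
    -- convexity of exp at points c*u₂ and 0, weights θ, 1-θ
    have hconv : ∀ c : ℝ, Real.exp (c * u₁) ≤ θ * Real.exp (c * u₂) + (1 - θ) := by
      intro c
      have := convexOn_exp.2 (Set.mem_univ (c * u₂)) (Set.mem_univ (0 : ℝ))
        hθpos.le (by linarith : (0:ℝ) ≤ 1 - θ) (by ring)
      simp only [smul_eq_mul, mul_zero, add_zero, Real.exp_zero, mul_one] at this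
      calc Real.exp (c * u₁) = Real.exp (θ * (c * u₂)) := by rw [← hθu]; ring_nf
        _ ≤ θ * Real.exp (c * u₂) + (1 - θ) := this
    have h1 : φ u₁ ≤ θ * φ u₂ + (1 - θ) * m := by
      have a1 := hconv (m - p)
      have a2 := hconv (m - q)
      have b1 : t * p * Real.exp ((m - p) * u₁) ≤ t * p * (θ * Real.exp ((m - p) * u₂) + (1 - θ)) :=
        mul_le_mul_of_nonneg_left a1 (mul_nonneg ht hp)
      have b2 : s * q * Real.exp ((m - q) * u₁) ≤ s * q * (θ * Real.exp ((m - q) * u₂) + (1 - θ)) :=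
        mul_le_mul_of_nonneg_left a2 (mul_nonneg hs hq)
      simp only [hφ]
      calc t * p * Real.exp ((m - p) * u₁) + s * q * Real.exp ((m - q) * u₁)
          ≤ t * p * (θ * Real.exp ((m - p) * u₂) + (1 - θ))
            + s * q * (θ * Real.exp ((m - q) * u₂) + (1 - θ)) := add_le_add b1 b2
        _ = θ * (t * p * Real.exp ((m - p) * u₂) + s * q * Real.exp ((m - q) * u₂))
            + (1 - θ) * (t * p + s * q) := by ring
        _ = θ * φ u₂ + (1 - θ) * m := by rw [hφ, hm]
    nlinarith
  -- once ψ goes negative it stays negative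
  have hK : ∀ r₁ r₂ : ℝ, 0 ≤ r₁ → r₁ ≤ r₂ → ψ r₁ < 0 → ψ r₂ < 0 := by
    intro r₁ r₂ h1 h12 hneg
    have hu : b * r₁ ^ 2 ≤ b * r₂ ^ 2 :=
      mul_le_mul_of_nonneg_left (pow_le_pow_left₀ h1 h12 2) hb.le
    have hu1 : 0 ≤ b * r₁ ^ 2 := by positivity
    have hψiff : ∀ r : ℝ, ψ r < 0 ↔ m < φ (b * r ^ 2) := by
      intro r
      rw [hfact r]
      constructor
      · intro h
        by_contra hc
        push_neg at hc
        have := mul_nonneg (sub_nonneg.2 hc) (Real.exp_pos (-(b * m * r ^ 2))).le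
        linarith
      · intro h
        have := mul_neg_of_neg_of_pos (sub_neg.2 h) (Real.exp_pos (-(b * m * r ^ 2)))
        linarith
    rw [hψiff] at hneg ⊢
    exact hφstep _ _ hu1 hu hneg
  -- define the crossing point
  set T : Set ℝ := insert (0 : ℝ) {r | r ∈ Set.Icc (0 : ℝ) D ∧ 0 ≤ ψ r} with hT
  have hTne : T.Nonempty := ⟨0, Set.mem_insert _ _⟩
  have hTbdd : BddAbove T := by
    refine ⟨D, fun x hx => ?_⟩
    rcases hx with rfl | ⟨hx1, _⟩
    · exact hD
    · exact hx1.2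
  set r₀ : ℝ := sSup T with hr₀
  have hr₀mem : r₀ ∈ Set.Icc (0 : ℝ) D := by
    constructor
    · exact le_csSup hTbdd (Set.mem_insert _ _)
    · apply csSup_le hTne
      intro x hx
      rcases hx with rfl | ⟨hx1, _⟩
      · exact hD
      · exact hx1.2
  refine ⟨r₀, hr₀mem, ?_, ?_⟩
  · intro r hr hrlt
    by_contra hcon
    push_neg at hcon
    have : r₀ ≤ r := by
      apply csSup_le hTne
      intro x hx
      by_contra hxr
      push_neg at hxr
      rcases hx with rfl | ⟨hx1, hx2⟩
      · exact absurd hxr (not_lt.mpr hr)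
      · exact absurd hx2 (not_le.mpr (hK r x hr hxr.le hcon))
    linarith
  · intro r hr₀r hrD
    have hr0 : 0 ≤ r := le_trans hr₀mem.1 hr₀r.le
    by_contra hcon
    push_neg at hcon
    have : r ∈ T := Or.inr ⟨⟨hr0, hrD⟩, hcon⟩
    have := le_csSup hTbdd this
    linarith

/-- Abstract core of Theorem 3: for any nonnegative non-increasing integrable coverage
weight `w`, the per-file approximate hit probability
`p ↦ ∫_0^D p r e^{-b p r²} w(r) dr` is concave in the cache probability `p` on `[0, ∞)`. -/
theorem hit_probability_concave_of_antitone_weight (b D : ℝ) (hb : 0 < b) (hD : 0 < D)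
    (w : ℝ → ℝ) (hw_nonneg : ∀ r ∈ Set.Icc (0 : ℝ) D, 0 ≤ w r)
    (hw_anti : AntitoneOn w (Set.Icc (0 : ℝ) D))
    (hw_int : IntegrableOn w (Set.Icc (0 : ℝ) D)) :
    ConcaveOn ℝ (Set.Ici (0 : ℝ))
      (fun p => ∫ r in (0 : ℝ)..D, p * r * Real.exp (-(b * p * r ^ 2)) * w r) := by
  -- notation
  set g : ℝ → ℝ → ℝ := fun c r => c * r * Real.exp (-(b * c * r ^ 2)) with hg
  have hgcont : ∀ c, Continuous (g c) := by
    intro c; simp only [hg]; fun_prop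
  have hIcc : Set.uIcc (0 : ℝ) D = Set.Icc 0 D := Set.uIcc_of_le hD.le
  -- integrability of g c * w on the interval
  have hint : ∀ c : ℝ, IntervalIntegrable (fun r => g c r * w r) volume 0 D := by
    intro c
    apply IntegrableOn.intervalIntegrable
    rw [hIcc]
    exact IntegrableOn.continuousOn_mul (hgcont c).continuousOn hw_int isCompact_Icc
  constructor
  · exact convex_Ici 0
  intro p hp q hq t s ht hs hts
  simp only [smul_eq_mul]
  have hp' : (0:ℝ) ≤ p := hp
  have hq' : (0:ℝ) ≤ q := hq
  set m : ℝ := t * p + s * q with hm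
  -- the defect function
  set ψ : ℝ → ℝ := fun r => m * Real.exp (-(b * m * r ^ 2))
      - t * p * Real.exp (-(b * p * r ^ 2)) - s * q * Real.exp (-(b * q * r ^ 2)) with hψ
  have hh₀ : ∀ r : ℝ, g m r - t * g p r - s * g q r = r * ψ r := by
    intro r; simp only [hg, hψ]; ring
  -- crossing point
  obtain ⟨r₀, hr₀mem, hbefore, hafter⟩ :=
    hit_single_crossing b p q t s D hb hp' hq' ht hs hts hD.le
  -- pointwise inequality on Icc 0 D
  have hptwise : ∀ r ∈ Set.Icc (0 : ℝ) D,
      w r₀ * (r * ψ r) ≤ r * ψ r * w r := by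
    intro r hr
    rcases lt_trichotomy r r₀ with hlt | rfl | hgt
    · have hψr : 0 ≤ ψ r := hbefore r hr.1 hlt
      have hnn : 0 ≤ r * ψ r := mul_nonneg hr.1 hψr
      have hwle : w r₀ ≤ w r := hw_anti hr hr₀mem hlt.le
      calc w r₀ * (r * ψ r) ≤ w r * (r * ψ r) := mul_le_mul_of_nonneg_right hwle hnn
        _ = r * ψ r * w r := mul_comm _ _
    · exact le_of_eq (mul_comm _ _)
    · have hψr : ψ r < 0 := hafter r hgt hr.2
      have hnp : r * ψ r ≤ 0 := mul_nonpos_of_nonneg_of_nonpos hr.1 hψr.le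
      have hwle : w r ≤ w r₀ := hw_anti hr₀mem hr hgt.le
      calc w r₀ * (r * ψ r) ≤ w r * (r * ψ r) := mul_le_mul_of_nonpos_right hwle hnp
        _ = r * ψ r * w r := mul_comm _ _
  -- the defect has nonnegative total integral
  have hw₀ : 0 ≤ w r₀ := hw_nonneg r₀ hr₀mem
  have hintψ : IntervalIntegrable (fun r => r * ψ r) volume 0 D := by
    apply Continuous.intervalIntegrable
    simp only [hψ]; fun_prop
  have htotal : 0 ≤ ∫ r in (0:ℝ)..D, r * ψ r := by
    have e1 : ∀ r : ℝ, r * ψ r = g m r - (t * g p r + s * g q r) := by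
      intro r; rw [← hh₀ r]; ring
    have ig : ∀ c : ℝ, IntervalIntegrable (g c) volume 0 D :=
      fun c => (hgcont c).intervalIntegrable 0 D
    have hsplit : (∫ r in (0:ℝ)..D, r * ψ r)
        = (∫ r in (0:ℝ)..D, g m r) - (t * ∫ r in (0:ℝ)..D, g p r)
          - (s * ∫ r in (0:ℝ)..D, g q r) := by
      rw [show (fun r => r * ψ r) = fun r => g m r - (t * g p r + s * g q r) from funext e1]
      rw [intervalIntegral.integral_sub (ig m) (((ig p).const_mul t).add ((ig q).const_mul s)),
        intervalIntegral.integral_add ((ig p).const_mul t) ((ig q).const_mul s),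
        intervalIntegral.integral_const_mul, intervalIntegral.integral_const_mul]
      ring
    rw [hsplit]
    have hcalc : ∀ c : ℝ, (∫ r in (0:ℝ)..D, g c r)
        = (1 - Real.exp (-(b * c * D ^ 2))) / (2 * b) := fun c => hit_aux_integral b c D hb
    rw [hcalc m, hcalc p, hcalc q]
    -- convexity of exp gives exp(-(b m D²)) ≤ t exp(-(b p D²)) + s exp(-(b q D²))
    have hconv := convexOn_exp.2 (Set.mem_univ (-(b * p * D ^ 2))) (Set.mem_univ (-(b * q * D ^ 2)))
      ht hs hts
    simp only [smul_eq_mul] at hconv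
    have harg : t * -(b * p * D ^ 2) + s * -(b * q * D ^ 2) = -(b * m * D ^ 2) := by
      rw [hm]; ring
    rw [harg] at hconv
    have h2b : (0:ℝ) < 2 * b := by linarith
    have hre : (1 - Real.exp (-(b * m * D ^ 2))) / (2 * b)
        - t * ((1 - Real.exp (-(b * p * D ^ 2))) / (2 * b))
        - s * ((1 - Real.exp (-(b * q * D ^ 2))) / (2 * b))
        = ((1 - Real.exp (-(b * m * D ^ 2))) - t * (1 - Real.exp (-(b * p * D ^ 2)))
            - s * (1 - Real.exp (-(b * q * D ^ 2)))) / (2 * b) := by ring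
    rw [hre]
    apply div_nonneg _ h2b.le
    nlinarith
  -- assemble
  have hmono : (∫ r in (0:ℝ)..D, w r₀ * (r * ψ r)) ≤ ∫ r in (0:ℝ)..D, r * ψ r * w r := by
    apply intervalIntegral.integral_mono_on hD.le (hintψ.const_mul _) _ hptwise
    have : (fun r => r * ψ r * w r) = fun r => (g m r - t * g p r - s * g q r) * w r := by
      funext r; rw [hh₀ r]
    rw [this]
    have : (fun r => (g m r - t * g p r - s * g q r) * w r)
        = fun r => g m r * w r - t * (g p r * w r) - s * (g q r * w r) := by
      funext r; ring
    rw [this]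
    exact ((hint m).sub ((hint p).const_mul t)).sub ((hint q).const_mul s)
  rw [intervalIntegral.integral_const_mul] at hmono
  have hkey : 0 ≤ ∫ r in (0:ℝ)..D, r * ψ r * w r :=
    le_trans (mul_nonneg hw₀ htotal) hmono
  -- rewrite the goal integrals
  have hrw : (∫ r in (0:ℝ)..D, r * ψ r * w r)
      = (∫ r in (0:ℝ)..D, g m r * w r) - (t * ∫ r in (0:ℝ)..D, g p r * w r)
        - (s * ∫ r in (0:ℝ)..D, g q r * w r) := by
    have : (fun r => r * ψ r * w r)
        = fun r => g m r * w r - t * (g p r * w r) - s * (g q r * w r) := by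
      funext r; rw [← hh₀ r]; ring
    rw [this]
    rw [intervalIntegral.integral_sub ((hint m).sub ((hint p).const_mul t)) ((hint q).const_mul s),
      intervalIntegral.integral_sub (hint m) ((hint p).const_mul t),
      intervalIntegral.integral_const_mul, intervalIntegral.integral_const_mul]
  rw [hrw] at hkey
  simp only [hg] at hkey ⊢
  linarith
end

section
/- Let λ > 0, D > 0, c ≥ 0, α > 0, and let n ≥ 1 be a natural number. Then the function p ↦ ∫_0^D 2·π·λ·p·r·e^{−λ·π·p·r²}·( 1 − (1 − e^{−c·r^α})^n ) dr is concave on the interval [0, 1]. -/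
open MeasureTheory intervalIntegral Set

noncomputable def Wfun (c α : ℝ) (n : ℕ) (r : ℝ) : ℝ :=
  1 - (1 - Real.exp (-(c * r ^ α))) ^ n

noncomputable def Vfun (c α : ℝ) (n : ℕ) (r : ℝ) : ℝ :=
  (n : ℝ) * (1 - Real.exp (-(c * r ^ α))) ^ (n - 1) * Real.exp (-(c * r ^ α)) *
    (c * α * r ^ (α - 1))

lemma cont_rpow (α : ℝ) (hα : 0 < α) : Continuous fun r : ℝ => r ^ α := by
  rw [continuous_iff_continuousAt]
  intro x
  rcases eq_or_ne x 0 with h | h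
  · exact Real.continuousAt_rpow_const x α (Or.inr hα.le)
  · exact Real.continuousAt_rpow_const x α (Or.inl h)

lemma contW (c α : ℝ) (hα : 0 < α) (n : ℕ) : Continuous (Wfun c α n) := by
  unfold Wfun
  exact (continuous_const.sub
    ((continuous_const.sub ((continuous_const.mul (cont_rpow α hα)).neg.rexp)).pow n))

lemma hasDerivAt_W (c α : ℝ) (n : ℕ) {r : ℝ} (hr : 0 < r) :
    HasDerivAt (Wfun c α n) (-(Vfun c α n r)) r := by
  have h1 : HasDerivAt (fun r : ℝ => r ^ α) (α * r ^ (α - 1)) r :=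
    Real.hasDerivAt_rpow_const (Or.inl hr.ne')
  have h2 : HasDerivAt (fun r : ℝ => -(c * r ^ α)) (-(c * (α * r ^ (α - 1)))) r :=
    ((h1.const_mul c)).neg
  have h3 : HasDerivAt (fun r : ℝ => 1 - Real.exp (-(c * r ^ α)))
      (-(Real.exp (-(c * r ^ α)) * -(c * (α * r ^ (α - 1))))) r :=
    (h2.exp).const_sub 1
  have h5 := (h3.pow n).const_sub 1
  refine h5.congr_deriv ?_
  unfold Vfun
  ring

lemma hasDerivAt_G (A p r : ℝ) :
    HasDerivAt (fun r : ℝ => 1 - Real.exp (-(A * p * r ^ 2)))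
      (2 * A * p * r * Real.exp (-(A * p * r ^ 2))) r := by
  have h1 : HasDerivAt (fun r : ℝ => -(A * p * r ^ 2)) (-(A * p * (2 * r ^ 1))) r :=
    (((hasDerivAt_pow 2 r).const_mul (A * p))).neg
  have h2 := (h1.exp).const_sub 1
  refine h2.congr_deriv ?_
  ring

lemma G_nonneg {x : ℝ} (hx : 0 ≤ x) : 0 ≤ 1 - Real.exp (-x) := by
  have : Real.exp (-x) ≤ 1 := Real.exp_le_one_iff.2 (by linarith)
  linarith

lemma G_le {x : ℝ} : 1 - Real.exp (-x) ≤ x := by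
  have := Real.add_one_le_exp (-x)
  linarith

lemma base_mem {x : ℝ} (hx : 0 ≤ x) : 1 - Real.exp (-x) ∈ Set.Icc (0:ℝ) 1 :=
  ⟨G_nonneg hx, by have := Real.exp_pos (-x); linarith⟩

lemma W_nonneg (c α : ℝ) (n : ℕ) {r : ℝ} (hc : 0 ≤ c) (hr : 0 ≤ r) :
    0 ≤ Wfun c α n r := by
  have hx : (0:ℝ) ≤ c * r ^ α := mul_nonneg hc (Real.rpow_nonneg hr α)
  have h := base_mem hx
  have := pow_le_one₀ h.1 h.2 (n := n)
  unfold Wfun; linarith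

lemma V_nonneg (c α : ℝ) (n : ℕ) {r : ℝ} (hc : 0 ≤ c) (hα : 0 ≤ α) (hr : 0 ≤ r) :
    0 ≤ Vfun c α n r := by
  have hx : (0:ℝ) ≤ c * r ^ α := mul_nonneg hc (Real.rpow_nonneg hr α)
  have h := base_mem hx
  unfold Vfun
  have he := (Real.exp_pos (-(c * r ^ α))).le
  have hcar : (0:ℝ) ≤ c * α * r ^ (α - 1) :=
    mul_nonneg (mul_nonneg hc hα) (Real.rpow_nonneg hr _)
  exact mul_nonneg (mul_nonneg (mul_nonneg (Nat.cast_nonneg n) (pow_nonneg h.1 _)) he) hcar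

lemma V_le (c α : ℝ) (n : ℕ) {r : ℝ} (hc : 0 ≤ c) (hα : 0 ≤ α) (hr : 0 ≤ r) :
    Vfun c α n r ≤ (n : ℝ) * (c * α * r ^ (α - 1)) := by
  have hx : (0:ℝ) ≤ c * r ^ α := mul_nonneg hc (Real.rpow_nonneg hr α)
  have h := base_mem hx
  have hp : (1 - Real.exp (-(c * r ^ α))) ^ (n - 1) ≤ 1 := pow_le_one₀ h.1 h.2
  have he : Real.exp (-(c * r ^ α)) ≤ 1 := Real.exp_le_one_iff.2 (by linarith)
  have he0 : (0:ℝ) ≤ Real.exp (-(c * r ^ α)) := (Real.exp_pos _).le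
  have hp0 : (0:ℝ) ≤ (1 - Real.exp (-(c * r ^ α))) ^ (n - 1) := pow_nonneg h.1 _
  have hcar : (0:ℝ) ≤ c * α * r ^ (α - 1) :=
    mul_nonneg (mul_nonneg hc hα) (Real.rpow_nonneg hr _)
  unfold Vfun
  calc (n : ℝ) * (1 - Real.exp (-(c * r ^ α))) ^ (n - 1) * Real.exp (-(c * r ^ α)) *
        (c * α * r ^ (α - 1))
      ≤ (n : ℝ) * 1 * 1 * (c * α * r ^ (α - 1)) := by
        apply mul_le_mul_of_nonneg_right _ hcar
        have h1 : (1 - Real.exp (-(c * r ^ α))) ^ (n - 1) * Real.exp (-(c * r ^ α)) ≤ 1 :=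
          mul_le_one₀ hp he0 he
        have hn0 : (0:ℝ) ≤ (n:ℝ) := Nat.cast_nonneg n
        nlinarith
    _ = (n : ℝ) * (c * α * r ^ (α - 1)) := by ring

/-- integrability of `V * G`. -/
lemma I2 (lam D c α : ℝ) (hlam : 0 < lam) (hD : 0 < D) (hc : 0 ≤ c) (hα : 0 < α)
    (n : ℕ) {p : ℝ} (hp : p ∈ Set.Icc (0:ℝ) 1) :
    IntervalIntegrable
      (fun r => Vfun c α n r * (1 - Real.exp (-(lam * Real.pi * p * r ^ 2))))
      volume 0 D := by
  have hbig : IntervalIntegrable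
      (fun r : ℝ => ((n : ℝ) * (c * α) * (lam * Real.pi)) * r ^ (α + 1)) volume 0 D :=
    ((continuous_const.mul (cont_rpow (α + 1) (by linarith))).intervalIntegrable 0 D)
  refine hbig.mono_fun ?_ ?_
  · apply ContinuousOn.aestronglyMeasurable _ measurableSet_uIoc
    rw [Set.uIoc_of_le hD.le]
    apply ContinuousOn.mul _ (Continuous.continuousOn (by continuity))
    intro r hr
    apply ContinuousAt.continuousWithinAt
    unfold Vfun
    have h1 : ContinuousAt (fun r : ℝ => r ^ (α - 1)) r :=
      Real.continuousAt_rpow_const r (α - 1) (Or.inl (ne_of_gt hr.1))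
    have h2 : ContinuousAt (fun r : ℝ => Real.exp (-(c * r ^ α))) r :=
      (((cont_rpow α hα).continuousAt).const_mul c).neg.rexp
    exact ((continuousAt_const.mul ((continuousAt_const.sub h2).pow _)).mul h2).mul
      ((continuousAt_const.mul h1))
  · rw [Set.uIoc_of_le hD.le]
    filter_upwards [MeasureTheory.ae_restrict_mem measurableSet_Ioc] with r hr
    have hr0 : 0 < r := hr.1
    have hp0 := hp.1
    have hp1 := hp.2
    have hx2 : (0:ℝ) ≤ lam * Real.pi * p * r ^ 2 := by positivity
    have hV0 := V_nonneg c α n hc hα.le hr0.le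
    have hVle := V_le c α n hc hα.le hr0.le
    have hG0 : (0:ℝ) ≤ 1 - Real.exp (-(lam * Real.pi * p * r ^ 2)) := G_nonneg hx2
    have hGle : 1 - Real.exp (-(lam * Real.pi * p * r ^ 2)) ≤ lam * Real.pi * p * r ^ 2 := G_le
    have hsplit : r ^ (α + 1) = r ^ (α - 1) * r ^ (2:ℕ) := by
      rw [← Real.rpow_natCast r 2, ← Real.rpow_add hr0]
      congr 1
      ring
    have hKnn : (0:ℝ) ≤ (n:ℝ) * (c * α) * (lam * Real.pi) * (r ^ (α - 1) * r ^ (2:ℕ)) := by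
      have := Real.rpow_nonneg hr0.le (α - 1)
      positivity
    have hbd : Vfun c α n r * (1 - Real.exp (-(lam * Real.pi * p * r ^ 2)))
        ≤ (n : ℝ) * (c * α) * (lam * Real.pi) * r ^ (α + 1) := by
      calc Vfun c α n r * (1 - Real.exp (-(lam * Real.pi * p * r ^ 2)))
          ≤ ((n : ℝ) * (c * α * r ^ (α - 1))) * (lam * Real.pi * p * r ^ 2) := by
            apply mul_le_mul hVle hGle hG0
            have := Real.rpow_nonneg hr0.le (α - 1)
            positivity
        _ = ((n:ℝ) * (c * α) * (lam * Real.pi) * (r ^ (α - 1) * r ^ (2:ℕ))) * p := by ring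
        _ ≤ ((n:ℝ) * (c * α) * (lam * Real.pi) * (r ^ (α - 1) * r ^ (2:ℕ))) * 1 :=
            mul_le_mul_of_nonneg_left hp1 hKnn
        _ = (n : ℝ) * (c * α) * (lam * Real.pi) * r ^ (α + 1) := by rw [hsplit]; ring
    have hVG0 : (0:ℝ) ≤ Vfun c α n r * (1 - Real.exp (-(lam * Real.pi * p * r ^ 2))) :=
      mul_nonneg hV0 hG0
    rw [Real.norm_eq_abs, Real.norm_eq_abs, abs_of_nonneg hVG0, abs_of_nonneg (hVG0.trans hbd)]
    exact hbd

/-- pointwise concavity of `p ↦ 1 - exp (-(L * p * R))`. -/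
lemma pointwise_concave (L R x y a b : ℝ) (ha : 0 ≤ a) (hb : 0 ≤ b) (hab : a + b = 1) :
    a * (1 - Real.exp (-(L * x * R))) + b * (1 - Real.exp (-(L * y * R)))
      ≤ 1 - Real.exp (-(L * (a * x + b * y) * R)) := by
  have h := convexOn_exp.2 (Set.mem_univ (-(L * x * R))) (Set.mem_univ (-(L * y * R))) ha hb hab
  simp only [smul_eq_mul] at h
  have heq : -(L * (a * x + b * y) * R) = a * -(L * x * R) + b * -(L * y * R) := by ring
  rw [heq]
  nlinarith [h]

/-- the key integration-by-parts identity. -/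
lemma key_identity (lam D c α : ℝ) (hlam : 0 < lam) (hD : 0 < D) (hc : 0 ≤ c) (hα : 0 < α)
    (n : ℕ) {p : ℝ} (hp : p ∈ Set.Icc (0:ℝ) 1) :
    (∫ r in (0 : ℝ)..D,
        2 * Real.pi * lam * p * r * Real.exp (-(lam * Real.pi * p * r ^ 2)) *
          (1 - (1 - Real.exp (-(c * r ^ α))) ^ n))
      = Wfun c α n D * (1 - Real.exp (-(lam * Real.pi * p * D ^ 2)))
        + ∫ r in (0 : ℝ)..D,
            Vfun c α n r * (1 - Real.exp (-(lam * Real.pi * p * r ^ 2))) := by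
  set A := lam * Real.pi with hA
  set G : ℝ → ℝ := fun r => 1 - Real.exp (-(A * p * r ^ 2)) with hG
  set G' : ℝ → ℝ := fun r => 2 * A * p * r * Real.exp (-(A * p * r ^ 2)) with hG'
  have hcontG : Continuous G := by
    apply continuous_const.sub
    apply Real.continuous_exp.comp
    continuity
  have hcontG' : Continuous G' := by
    apply Continuous.mul (by continuity)
    apply Real.continuous_exp.comp
    continuity
  -- FTC for H = W * G
  have hVG : IntervalIntegrable (fun r => Vfun c α n r * G r) volume 0 D :=
    I2 lam D c α hlam hD hc hα n hp
  have hWG' : IntervalIntegrable (fun r => Wfun c α n r * G' r) volume 0 D :=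
    (((contW c α hα n).mul hcontG').intervalIntegrable 0 D)
  have hsum : IntervalIntegrable
      (fun r => -(Vfun c α n r * G r) + Wfun c α n r * G' r) volume 0 D :=
    hVG.neg.add hWG'
  have hftc : (∫ r in (0:ℝ)..D, (-(Vfun c α n r * G r) + Wfun c α n r * G' r))
      = Wfun c α n D * G D - Wfun c α n 0 * G 0 := by
    apply intervalIntegral.integral_eq_sub_of_hasDerivAt_of_le hD.le
      (((contW c α hα n).mul hcontG).continuousOn)
      (fun r hr => ?_) hsum
    have h1 := hasDerivAt_W c α n hr.1
    have h2 : HasDerivAt G (G' r) r := hasDerivAt_G A p r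
    have := h1.mul h2
    refine this.congr_deriv ?_
    ring
  have hG0 : G 0 = 0 := by simp [hG]
  rw [hG0, mul_zero, sub_zero] at hftc
  have hVGn : IntervalIntegrable (fun r => -(Vfun c α n r * G r)) volume 0 D := hVG.neg
  rw [intervalIntegral.integral_add hVGn hWG', intervalIntegral.integral_neg] at hftc
  have hmain : (∫ r in (0:ℝ)..D, Wfun c α n r * G' r)
      = Wfun c α n D * G D + ∫ r in (0:ℝ)..D, Vfun c α n r * G r := by linarith
  have hfun : (fun r => 2 * Real.pi * lam * p * r * Real.exp (-(lam * Real.pi * p * r ^ 2)) *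
      (1 - (1 - Real.exp (-(c * r ^ α))) ^ n)) = fun r => Wfun c α n r * G' r := by
    funext r
    simp only [hG', hA, Wfun]
    ring
  rw [hfun, hmain]

/-- Theorem 3 in explicit form: the approximate closest-selection hit probability for one
file is concave in the cache probability `p` on `[0, 1]`. -/
theorem closest_selection_hit_probability_concave (lam D c α : ℝ) (hlam : 0 < lam)
    (hD : 0 < D) (hc : 0 ≤ c) (hα : 0 < α) (n : ℕ) (hn : 1 ≤ n) :
    ConcaveOn ℝ (Set.Icc (0 : ℝ) 1)
      (fun p => ∫ r in (0 : ℝ)..D,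
        2 * Real.pi * lam * p * r * Real.exp (-(lam * Real.pi * p * r ^ 2)) *
          (1 - (1 - Real.exp (-(c * r ^ α))) ^ n)) := by
  refine ⟨convex_Icc 0 1, fun x hx y hy a b ha hb hab => ?_⟩
  have hz : a • x + b • y ∈ Set.Icc (0:ℝ) 1 := (convex_Icc 0 1) hx hy ha hb hab
  simp only [smul_eq_mul] at hz ⊢
  rw [key_identity lam D c α hlam hD hc hα n hx,
      key_identity lam D c α hlam hD hc hα n hy,
      key_identity lam D c α hlam hD hc hα n hz]
  -- notation
  set z := a * x + b * y with hzdef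
  have hW0 : 0 ≤ Wfun c α n D := W_nonneg c α n hc hD.le
  -- boundary term
  have hbdry : a * (1 - Real.exp (-(lam * Real.pi * x * D ^ 2)))
      + b * (1 - Real.exp (-(lam * Real.pi * y * D ^ 2)))
      ≤ 1 - Real.exp (-(lam * Real.pi * z * D ^ 2)) := by
    have := pointwise_concave (lam * Real.pi) (D ^ 2) x y a b ha hb hab
    convert this using 3 <;> ring
  -- integral term
  have hIx := I2 lam D c α hlam hD hc hα n hx
  have hIy := I2 lam D c α hlam hD hc hα n hy
  have hIz := I2 lam D c α hlam hD hc hα n hz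
  have hint : a * (∫ r in (0:ℝ)..D, Vfun c α n r * (1 - Real.exp (-(lam * Real.pi * x * r ^ 2))))
      + b * (∫ r in (0:ℝ)..D, Vfun c α n r * (1 - Real.exp (-(lam * Real.pi * y * r ^ 2))))
      ≤ ∫ r in (0:ℝ)..D, Vfun c α n r * (1 - Real.exp (-(lam * Real.pi * z * r ^ 2))) := by
    rw [← intervalIntegral.integral_const_mul, ← intervalIntegral.integral_const_mul,
        ← intervalIntegral.integral_add (hIx.const_mul a) (hIy.const_mul b)]
    apply intervalIntegral.integral_mono_on hD.le ((hIx.const_mul a).add (hIy.const_mul b)) hIz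
    intro r hr
    have hV0 := V_nonneg c α n hc hα.le hr.1
    have hpc : a * (1 - Real.exp (-(lam * Real.pi * x * r ^ 2)))
        + b * (1 - Real.exp (-(lam * Real.pi * y * r ^ 2)))
        ≤ 1 - Real.exp (-(lam * Real.pi * z * r ^ 2)) := by
      have := pointwise_concave (lam * Real.pi) (r ^ 2) x y a b ha hb hab
      convert this using 3 <;> ring
    calc a * (Vfun c α n r * (1 - Real.exp (-(lam * Real.pi * x * r ^ 2))))
        + b * (Vfun c α n r * (1 - Real.exp (-(lam * Real.pi * y * r ^ 2))))
        = Vfun c α n r * (a * (1 - Real.exp (-(lam * Real.pi * x * r ^ 2)))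
            + b * (1 - Real.exp (-(lam * Real.pi * y * r ^ 2)))) := by ring
      _ ≤ Vfun c α n r * (1 - Real.exp (-(lam * Real.pi * z * r ^ 2))) :=
          mul_le_mul_of_nonneg_left hpc hV0
  nlinarith [mul_le_mul_of_nonneg_left hbdry hW0]
end

section
/- Let N be a natural number, q : Fin N → ℝ with q_i ≥ 0 for all i, let A ≥ 0, D > 0, c ≥ 0, α > 0, and let n ≥ 1 be a natural number. Define S = ∑_{m=1}^{n} (−1)^{m+1}·C(n, m)·∫_0^D e^{−c·m·y^α}·(2y/D²) dy, where C(n, m) is the binomial coefficient. Then S ≥ 0, and the function p ↦ ∑_{i=1}^{N} q_i·( 1 − exp(−A·p_i·S) ) is concave on the box [0, 1]^N ⊆ ℝ^N. -/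
/-!
By the binomial theorem, `∑_{m=1}^n (-1)^(m+1) C(n,m) t^m = 1 - (1 - t)^n`. Applied under the
integral with `t = exp (-c y^α) ∈ [0, 1]`, it turns `S` into the integral of the nonnegative
function `(1 - (1 - t)^n) · 2y/D²`, so `S ≥ 0`. For concavity, each summand is `qᵢ ≥ 0` times
the function `t ↦ 1 - exp (-k t)`, concave for every real `k`, of the single coordinate `pᵢ`.
-/

open Real Finset

theorem sum_Icc_neg_one_pow_mul_choose_mul_pow {R : Type*} [CommRing R] (t : R) (n : ℕ) :
    ∑ m ∈ Icc 1 n, (-1 : R) ^ (m + 1) * n.choose m * t ^ m = 1 - (1 - t) ^ n := by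
  have h := add_pow (-t) 1 n
  rw [range_eq_Ico, sum_eq_sum_Ico_succ_bot (by omega : 0 < n + 1), zero_add,
    Ico_add_one_right_eq_Icc] at h
  simp only [pow_zero, one_pow, mul_one, Nat.choose_zero_right, Nat.cast_one] at h
  rw [← neg_add_eq_sub t, h, ← sub_sub, sub_self, zero_sub, ← sum_neg_distrib]
  refine sum_congr rfl fun m _ => ?_
  rw [neg_pow t]
  ring

open intervalIntegral in
theorem sum_Icc_neg_one_pow_mul_choose_mul_integral {g w : ℝ → ℝ} {a b : ℝ} (n : ℕ)
    (hgw : ∀ m, IntervalIntegrable (fun y => g y ^ m * w y) MeasureTheory.volume a b) :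
    ∑ m ∈ Icc 1 n, (-1 : ℝ) ^ (m + 1) * n.choose m * ∫ y in a..b, g y ^ m * w y =
      ∫ y in a..b, (1 - (1 - g y) ^ n) * w y := calc
  _ = ∑ m ∈ Icc 1 n, ∫ y in a..b, (-1 : ℝ) ^ (m + 1) * n.choose m * (g y ^ m * w y) := by
    simp only [integral_const_mul]
  _ = ∫ y in a..b, ∑ m ∈ Icc 1 n, (-1 : ℝ) ^ (m + 1) * n.choose m * (g y ^ m * w y) :=
    (integral_finsetSum fun m _ => (hgw m).const_mul _).symm
  _ = _ := integral_congr fun y _ => by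
    simp only [← sum_Icc_neg_one_pow_mul_choose_mul_pow, sum_mul, mul_assoc]

theorem sum_Icc_neg_one_pow_mul_choose_mul_integral_nonneg {g w : ℝ → ℝ} {a b : ℝ} (hab : a ≤ b)
    (n : ℕ) (hgw : ∀ m, IntervalIntegrable (fun y => g y ^ m * w y) MeasureTheory.volume a b)
    (hg₀ : ∀ y ∈ Set.Icc a b, 0 ≤ g y) (hg₁ : ∀ y ∈ Set.Icc a b, g y ≤ 1)
    (hw : ∀ y ∈ Set.Icc a b, 0 ≤ w y) :
    0 ≤ ∑ m ∈ Icc 1 n, (-1 : ℝ) ^ (m + 1) * n.choose m * ∫ y in a..b, g y ^ m * w y := by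
  rw [sum_Icc_neg_one_pow_mul_choose_mul_integral n hgw]
  refine intervalIntegral.integral_nonneg hab fun y hy => mul_nonneg ?_ (hw y hy)
  have := pow_le_one₀ (n := n) (sub_nonneg.2 (hg₁ y hy)) (sub_le_self 1 (hg₀ y hy))
  linarith

theorem ConcaveOn.finsetSum {𝕜 E β ι : Type*} [Semiring 𝕜] [PartialOrder 𝕜] [AddCommMonoid E]
    [AddCommMonoid β] [PartialOrder β] [IsOrderedAddMonoid β] [SMul 𝕜 E] [Module 𝕜 β]
    {s : Set E} (hs : Convex 𝕜 s) {t : Finset ι} {f : ι → E → β}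
    (hf : ∀ i ∈ t, ConcaveOn 𝕜 s (f i)) : ConcaveOn 𝕜 s fun x => ∑ i ∈ t, f i x := by
  classical
  induction t using Finset.induction_on with
  | empty => simpa using concaveOn_const (0 : β) hs
  | insert i t hi ih =>
    simp only [sum_insert hi]
    exact (hf i (mem_insert_self i t)).add (ih fun j hj => hf j (mem_insert_of_mem hj))

theorem concaveOn_one_sub_exp_neg_mul (k : ℝ) :
    ConcaveOn ℝ Set.univ fun t => 1 - exp (-(k * t)) := by
  have := (concaveOn_const (1 : ℝ) convex_univ).sub
    (convexOn_exp.comp_linearMap (LinearMap.mulLeft ℝ (-k)))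
  refine this.congr fun t _ => ?_
  simp

theorem concaveOn_sum_mul_apply {ι : Type*} [Fintype ι] {g : ℝ → ℝ}
    (hg : ConcaveOn ℝ Set.univ g) {q : ι → ℝ} (hq : ∀ i, 0 ≤ q i) :
    ConcaveOn ℝ Set.univ fun p : ι → ℝ => ∑ i, q i * g (p i) :=
  ConcaveOn.finsetSum convex_univ fun i _ =>
    (hg.smul (hq i)).comp_linearMap (LinearMap.proj (R := ℝ) (φ := fun _ : ι => ℝ) i)

theorem best_selection_objective_concave_general (N : ℕ) (q : Fin N → ℝ) (hq : ∀ i, 0 ≤ q i)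
    (A : ℝ) (D : ℝ) (hD : 0 < D) (c : ℝ) (hc : 0 ≤ c) (α : ℝ) (hα : 0 < α)
    (n : ℕ) (S : ℝ)
    (hS : S = ∑ m ∈ Finset.Icc 1 n, (-1 : ℝ) ^ (m + 1) * (n.choose m : ℝ) *
      ∫ y in (0 : ℝ)..D, Real.exp (-(c * (m : ℝ) * y ^ α)) * (2 * y / D ^ 2)) :
    0 ≤ S ∧
      ConcaveOn ℝ (Set.Icc (0 : Fin N → ℝ) 1)
        (fun p => ∑ i, q i * (1 - Real.exp (-(A * p i * S)))) := by
  have hpow : ∀ (m : ℕ) (y : ℝ), exp (-(c * m * y ^ α)) = exp (-(c * y ^ α)) ^ m := fun m y => by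
    rw [← exp_nat_mul]; ring_nf
  have hrpow : Continuous fun y : ℝ => y ^ α := continuous_rpow_const hα.le
  refine ⟨?_, ?_⟩
  · simp only [hS, hpow]
    exact sum_Icc_neg_one_pow_mul_choose_mul_integral_nonneg hD.le n
      (fun m => Continuous.intervalIntegrable (by fun_prop) _ _)
      (fun y _ => (exp_pos _).le)
      (fun y hy => exp_le_one_iff.2 (neg_nonpos.2 (mul_nonneg hc (rpow_nonneg hy.1 α))))
      (fun y hy => div_nonneg (mul_nonneg zero_le_two hy.1) (sq_nonneg D))
  · refine ((concaveOn_sum_mul_apply (concaveOn_one_sub_exp_neg_mul (A * S)) hq).subset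
      (Set.subset_univ _) (convex_Icc 0 1)).congr fun p _ => ?_
    simp only [mul_right_comm A]

/-- Theorem 4: the alternating binomial coverage sum `S` is nonnegative, and the
best-selection objective `∑ᵢ qᵢ (1 - exp(-A pᵢ S))` is concave in the vector of cache
probabilities on the box `[0,1]^N`. -/
theorem best_selection_objective_concave (N : ℕ) (q : Fin N → ℝ) (hq : ∀ i, 0 ≤ q i)
    (A : ℝ) (hA : 0 ≤ A) (D : ℝ) (hD : 0 < D) (c : ℝ) (hc : 0 ≤ c) (α : ℝ) (hα : 0 < α)
    (n : ℕ) (hn : 1 ≤ n) (S : ℝ)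
    (hS : S = ∑ m ∈ Finset.Icc 1 n, (-1 : ℝ) ^ (m + 1) * (n.choose m : ℝ) *
      ∫ y in (0 : ℝ)..D, Real.exp (-(c * (m : ℝ) * y ^ α)) * (2 * y / D ^ 2)) :
    0 ≤ S ∧
      ConcaveOn ℝ (Set.Icc (0 : Fin N → ℝ) 1)
        (fun p => ∑ i, q i * (1 - Real.exp (-(A * p i * S)))) :=
  best_selection_objective_concave_general N q hq A D hD c hc α hα n S hS
end
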